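/- arXiv:1401.7194 — 9 statements merged into one kernel-verified Lean document; each statement's English description precedes it below -/
import Mathlib

section
/- Fix d ≥ 2. If a sequence satisfies C_0 = 1 and C_{k+1} = \sum over all d-tuples (k_1,...,k_d) of nonnegative integers with k_1+...+k_d = k of the product C_{k_1} * C_{k_2} * ... * C_{k_d}, then C_k = (1/(k(d-1)+1)) * binomial(dk, k) for all k (the Fuss–Catalan numbers). -/
/-!
The generating function `F = ∑ C k X^k` satisfies `F = 1 + X F^d`, hence
`F^(m+1) = F^m + X F^(m+d)`. So the coefficients `c m k = [X^k] F^m` satisfy the Raney recursion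
`c (m+1) (k+1) = c m (k+1) + c (m+d) k`, `c m 0 = 1`, `c 0 (k+1) = 0`, which determines them. The
Raney numbers `m / (d k + m) * binom (d k + m) k` satisfy it too, by Pascal's rule and
`binom N (k+1) * (k+1) = binom N k * (N - k)`; for `m = 1` they are the Fuss–Catalan numbers.
-/

open Finset PowerSeries

namespace PowerSeries

theorem coeff_pow_eq_sum_antidiagonalTuple {R : Type*} [CommSemiring R] (φ : R⟦X⟧) (m k : ℕ) :
    coeff k (φ ^ m) = ∑ v ∈ Nat.antidiagonalTuple m k, ∏ i, coeff (v i) φ := by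
  classical
  rw [← Fin.prod_const, coeff_prod, ← piAntidiag_univ_fin_eq_antidiagonalTuple, finsuppAntidiag,
    sum_map, ← sum_attach (piAntidiag univ k)]
  rfl

theorem coeff_succ_pow_succ_of_eq_one_add_X_mul_pow {R : Type*} [CommSemiring R] {F : R⟦X⟧}
    {d : ℕ} (hF : F = 1 + X * F ^ d) (m k : ℕ) :
    coeff (k + 1) (F ^ (m + 1)) = coeff (k + 1) (F ^ m) + coeff k (F ^ (m + d)) := by
  conv_lhs => rw [pow_succ, hF]
  rw [mul_add, mul_one, ← hF, map_add, mul_left_comm, coeff_succ_X_mul, ← pow_add]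

/-- Stated multiplied out, since `m / (d k + m)` is a junk division at `m = k = 0`. -/
theorem coeff_pow_mul_eq_choose_of_eq_one_add_X_mul_pow {F : ℕ⟦X⟧} {d : ℕ} (hd : 0 < d)
    (hF : F = 1 + X * F ^ d) (k m : ℕ) :
    coeff k (F ^ m) * (d * k + m) = m * (d * k + m).choose k := by
  induction k generalizing m with
  | zero =>
    have hF0 : constantCoeff F = 1 := by rw [hF]; simp
    simp [hF0]
  | succ k ih =>
    induction m with
    | zero => simp [coeff_one]
    | succ m ihm =>
      obtain ⟨e, rfl⟩ : ∃ e, d = e + 1 := ⟨d - 1, by omega⟩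
      have hB := ih (m + (e + 1))
      rw [show (e + 1) * k + (m + (e + 1)) = (e + 1) * (k + 1) + m by ring] at hB
      have hpascal := Nat.choose_succ_right_eq ((e + 1) * (k + 1) + m) k
      rw [show (e + 1) * (k + 1) + m - k = e * (k + 1) + m + 1 from
        Nat.sub_eq_of_eq_add (by ring)] at hpascal
      rw [coeff_succ_pow_succ_of_eq_one_add_X_mul_pow hF,
        show (e + 1) * (k + 1) + (m + 1) = (e + 1) * (k + 1) + m + 1 by ring, Nat.choose_succ_succ]
      apply Nat.eq_of_mul_eq_mul_right (show 0 < (e + 1) * (k + 1) + m by positivity)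
      push_cast [← Nat.cast_inj (R := ℤ)] at ihm hB hpascal ⊢
      linear_combination (((e : ℤ) + 1) * (k + 1) + m + 1) * (ihm + hB) - ((e : ℤ) + 1) * hpascal

theorem coeff_mul_eq_choose_of_eq_one_add_X_mul_pow {F : ℕ⟦X⟧} {d : ℕ} (hd : 0 < d)
    (hF : F = 1 + X * F ^ d) (k : ℕ) :
    coeff k F * (k * (d - 1) + 1) = (d * k).choose k := by
  have hk := coeff_pow_mul_eq_choose_of_eq_one_add_X_mul_pow hd hF k 1
  rw [pow_one] at hk
  have hsub : d * k + 1 - k = k * (d - 1) + 1 := by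
    obtain ⟨e, rfl⟩ : ∃ e, d = e + 1 := ⟨d - 1, by omega⟩
    exact Nat.sub_eq_of_eq_add (by simp only [add_tsub_cancel_right]; ring)
  apply Nat.eq_of_mul_eq_mul_right (show 0 < d * k + 1 by omega)
  rw [mul_right_comm, hk, one_mul, Nat.choose_mul_succ_eq, hsub]

end PowerSeries

/-- Fuss–Catalan recursion: fix `d ≥ 2`. If `C 0 = 1` and
`C (k+1) = ∑_{k₁+⋯+k_d = k} C k₁ * ⋯ * C k_d`, then
`C k = (1/(k(d-1)+1)) * binomial (d*k) k`. -/
theorem fussCatalan_recursion (d : ℕ) (hd : 2 ≤ d) (C : ℕ → ℕ) (h0 : C 0 = 1)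
    (hrec : ∀ k : ℕ, C (k + 1) =
      ∑ v ∈ Finset.Nat.antidiagonalTuple d k, ∏ i : Fin d, C (v i)) :
    ∀ k : ℕ, C k = (d * k).choose k / (k * (d - 1) + 1) := by
  have hF : PowerSeries.mk C = 1 + X * PowerSeries.mk C ^ d := by
    ext (_ | n)
    · simp [h0]
    · simp [coeff_succ_X_mul, coeff_pow_eq_sum_antidiagonalTuple, hrec]
  intro k
  rw [← coeff_mul_eq_choose_of_eq_one_add_X_mul_pow (by omega) hF, coeff_mk,
    Nat.mul_div_cancel _ (Nat.succ_pos _)]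
end

section
/- The Fuss–Catalan number C_k^{(d)} = (1/(k(d-1)+1)) * binomial(dk, k) is a natural number for all k ≥ 0 and d ≥ 2, i.e., k(d-1)+1 divides binomial(dk, k). -/
/-- The Fuss–Catalan number `(1/(k(d-1)+1)) * binomial (d*k) k` is a natural number:
`k*(d-1)+1` divides `binomial (d*k) k`, for all `k ≥ 0` and `d ≥ 2`. -/
theorem fussCatalan_integral (d k : ℕ) (hd : 2 ≤ d) :
    (k * (d - 1) + 1) ∣ (d * k).choose k := by
  set n := d * k with hn
  have hk : k ≤ n := Nat.le_mul_of_pos_left k (by omega)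
  have hd1 : k * (d - 1) + k = n := by
    have : k * (d - 1) + k * 1 = k * ((d - 1) + 1) := (Nat.mul_add k _ _).symm
    have h2 : (d - 1) + 1 = d := by omega
    rw [h2] at this
    simpa [hn, Nat.mul_comm] using this
  have hm : k * (d - 1) + 1 = n + 1 - k := by omega
  have h1 : (n + 1) * n.choose k = (n + 1).choose k * (n + 1 - k) := by
    rw [Nat.add_one_mul_choose_eq, ← Nat.choose_succ_right_eq]
  have hdvd : (k * (d - 1) + 1) ∣ (n + 1) * n.choose k := by
    rw [hm, h1]; exact dvd_mul_left _ _
  have hcop : Nat.Coprime (k * (d - 1) + 1) (n + 1) := by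
    have : n + 1 = (k * (d - 1) + 1) + k := by omega
    rw [this]
    simp [Nat.coprime_add_self_right, Nat.add_comm, Nat.coprime_add_mul_right_left,
      Nat.coprime_add_mul_left_left]
  exact (Nat.Coprime.dvd_of_dvd_mul_left hcop hdvd)
end

section
/- The Fuss–Catalan numbers satisfy the identity C_{k+1}^{(d)} = \sum_{k_1+...+k_d = k} C_{k_1}^{(d)} ... C_{k_d}^{(d)}, where C_k^{(d)} = (1/(k(d-1)+1)) * binomial(dk, k). -/
/-!
Let `R_p(n, r) = r / (p n + r) * C(p n + r, n)` be the Raney numbers, so that the Fuss–Catalan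
number `C_k^{(p)}` is `R_p(k, 1)`. Pascal's rule gives the recursion
`R_p(n + 1, r + 1) = R_p(n + 1, r) + R_p(n, r + p)` together with `R_p(n + 1, 0) = 0`, and a double
induction on `(n, r)` turns it into the convolution `∑_{i + j = n} R_p(i, r) R_p(j, s) = R_p(n, r + s)`.
Iterated `d` times, the convolution evaluates the right-hand side as `R_d(k, d)`, while the
recursion at `r = 0` gives `C_{k+1}^{(d)} = R_d(k + 1, 1) = R_d(k, d)`.
-/

open Finset

theorem Finset.Nat.sum_antidiagonalTuple_succ {M : Type*} [AddCommMonoid M] (d k : ℕ)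
    (f : (Fin (d + 1) → ℕ) → M) :
    ∑ v ∈ Nat.antidiagonalTuple (d + 1) k, f v =
      ∑ ab ∈ antidiagonal k, ∑ w ∈ Nat.antidiagonalTuple d ab.2, f (Fin.cons ab.1 w) := by
  change ((List.Nat.antidiagonalTuple (d + 1) k).map f).sum =
    ((List.Nat.antidiagonal k).map fun ab : ℕ × ℕ =>
      ((List.Nat.antidiagonalTuple d ab.2).map fun w => f (Fin.cons ab.1 w)).sum).sum
  simp [List.Nat.antidiagonalTuple, List.flatMap, List.sum_flatten, List.map_flatten,
    Function.comp_def]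

/-- The Raney number `r / (p n + r) * C(p n + r, n)`, in the division-free form
`C(N, n) - (p - 1) C(N, n - 1)` with `N = p n + r - 1` for `n > 0`. -/
def raney (p : ℕ) : ℕ → ℕ → ℤ
  | 0, _ => 1
  | n + 1, r => ((p * (n + 1) + r - 1).choose (n + 1) : ℤ) -
      (p - 1 : ℤ) * (p * (n + 1) + r - 1).choose n

section Raney

variable {p : ℕ}

@[simp] theorem raney_zero_left (p r : ℕ) : raney p 0 r = 1 := rfl

theorem succ_mul_raney_succ_left (hp : 0 < p) (n r : ℕ) :
    (n + 1) * raney p (n + 1) r = r * (p * (n + 1) + r - 1).choose n := by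
  have hpn : n + 1 ≤ p * (n + 1) := Nat.le_mul_of_pos_left _ hp
  have hchoose := Nat.choose_succ_right_eq (p * (n + 1) + r - 1) n
  zify [show n ≤ p * (n + 1) + r - 1 by omega, show 1 ≤ p * (n + 1) + r by omega] at hchoose
  simp only [raney]
  linear_combination hchoose

theorem raney_succ_left_zero (hp : 0 < p) (n : ℕ) : raney p (n + 1) 0 = 0 := by
  have h := succ_mul_raney_succ_left hp n 0
  simp only [Nat.cast_zero, zero_mul] at h
  exact (mul_eq_zero.mp h).resolve_left (by positivity)

theorem raney_one_left (hp : 0 < p) (r : ℕ) : raney p 1 r = r := by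
  simpa using succ_mul_raney_succ_left hp 0 r

theorem raney_succ_succ (hp : 0 < p) (n r : ℕ) :
    raney p (n + 1) (r + 1) = raney p (n + 1) r + raney p n (r + p) := by
  cases n with
  | zero =>
    simp only [raney_one_left hp, raney_zero_left]
    push_cast
    ring
  | succ n =>
    have hN : p * (n + 1 + 1) + (r + 1) - 1 = (p * (n + 1 + 1) + r - 1) + 1 := by
      have : 1 ≤ p * (n + 1 + 1) := Nat.one_le_iff_ne_zero.mpr (by positivity)
      omega
    have hN' : p * (n + 1) + (r + p) - 1 = p * (n + 1 + 1) + r - 1 := by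
      rw [mul_add p (n + 1) 1]
      omega
    simp only [raney, hN, hN', Nat.choose_succ_succ' _ (n + 1), Nat.choose_succ_succ' _ n]
    push_cast
    ring

theorem sum_antidiagonal_raney_mul_raney (hp : 0 < p) (n r s : ℕ) :
    ∑ ij ∈ antidiagonal n, raney p ij.1 r * raney p ij.2 s = raney p n (r + s) := by
  induction n generalizing r with
  | zero => simp
  | succ m ih =>
    induction r with
    | zero => simp [Nat.sum_antidiagonal_succ, raney_succ_left_zero hp]
    | succ r ihr =>
      have hsplit : ∑ ij ∈ antidiagonal m, raney p (ij.1 + 1) (r + 1) * raney p ij.2 s =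
          ∑ ij ∈ antidiagonal m, raney p (ij.1 + 1) r * raney p ij.2 s +
            ∑ ij ∈ antidiagonal m, raney p ij.1 (r + p) * raney p ij.2 s := by
        rw [← sum_add_distrib]
        exact sum_congr rfl fun ij _ => by rw [raney_succ_succ hp]; ring
      rw [Nat.sum_antidiagonal_succ, hsplit, ih, Nat.add_right_comm r 1 s, raney_succ_succ hp,
        ← ihr, Nat.sum_antidiagonal_succ, Nat.add_right_comm r p s]
      simp only [raney_zero_left]
      ring

theorem sum_antidiagonalTuple_prod_raney (hp : 0 < p) (d k r : ℕ) :
    ∑ v ∈ Nat.antidiagonalTuple d k, ∏ i, raney p (v i) r = raney p k (d * r) := by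
  induction d generalizing k with
  | zero => cases k <;> simp [raney_succ_left_zero hp]
  | succ d ih =>
    simp only [Nat.sum_antidiagonalTuple_succ, Fin.prod_univ_succ, Fin.cons_zero, Fin.cons_succ,
      ← mul_sum, ih, sum_antidiagonal_raney_mul_raney hp, add_mul, one_mul, add_comm r]

theorem raney_one_right_mul (hp : 0 < p) (k : ℕ) :
    raney p k 1 * (k * (p - 1) + 1 : ℕ) = (p * k).choose k := by
  cases k with
  | zero => simp
  | succ m =>
    have hraney := succ_mul_raney_succ_left hp m 1
    rw [Nat.add_sub_cancel] at hraney
    have hchoose := Nat.choose_succ_right_eq (p * (m + 1)) m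
    zify [show m ≤ p * (m + 1) by nlinarith, show 1 ≤ p from hp] at hchoose ⊢
    refine mul_right_cancel₀ (b := (m + 1 : ℤ)) (by positivity) ?_
    linear_combination (p * (m + 1) - m : ℤ) * hraney - hchoose

theorem natCast_choose_div_eq_raney (hp : 0 < p) (k : ℕ) :
    (((p * k).choose k / (k * (p - 1) + 1) : ℕ) : ℤ) = raney p k 1 := by
  rw [Int.natCast_div]
  exact Int.ediv_eq_of_eq_mul_left (by positivity) (raney_one_right_mul hp k).symm

end Raney

/-- The Fuss–Catalan numbers `C_k^{(d)} = (1/(k(d-1)+1)) * binomial (d*k) k` satisfy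
`C_{k+1}^{(d)} = ∑_{k₁+⋯+k_d = k} C_{k₁}^{(d)} ⋯ C_{k_d}^{(d)}`. -/
theorem fussCatalan_identity (d : ℕ) (hd : 2 ≤ d) (k : ℕ) :
    (d * (k + 1)).choose (k + 1) / ((k + 1) * (d - 1) + 1) =
      ∑ v ∈ Finset.Nat.antidiagonalTuple d k,
        ∏ i : Fin d, (d * v i).choose (v i) / (v i * (d - 1) + 1) := by
  have hpos : 0 < d := by omega
  apply Nat.cast_injective (R := ℤ)
  simp only [Nat.cast_sum, Nat.cast_prod, natCast_choose_div_eq_raney hpos,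
    sum_antidiagonalTuple_prod_raney hpos, mul_one]
  rw [raney_succ_succ hpos, raney_succ_left_zero hpos, zero_add, zero_add]
end

section
/- Let f : ℕ → (formal power series over ℚ) be defined recursively by f(0) = 0 and f(n+1) = f(n)^d + X, where d ≥ 2. Then for each n, the coefficients of f(n) up to degree n(d-1) agree with the coefficients of the series F = \sum_{k≥0} C_k^{(d)} X^{k(d-1)+1}, i.e., the iterates converge coefficientwise to F. -/
/-!
Write `d = s + 1` and `p = X - X ^ d`. Substituting `p` into the iterates `fₙ` gives the iterates
of `y ↦ y ^ d + p` from `0`, whose fixed point is `X`; since `y ↦ y ^ d` contracts the ideal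
`(X)`, they agree with `X` modulo `X ^ n`. Lagrange inversion in the form
`[X^m] q = [X^m] q(p) · p' · (X / p) ^ (m + 1)` then gives, for `n > m`,
`[X^m] fₙ = [X^(m-1)] (1 - d X^s) / (1 - X^s) ^ (m + 1)`, a difference of two binomial
coefficients that equals the Fuss–Catalan number.
-/

open PowerSeries

/-- The Fuss–Catalan number `C_k^{(d)} = (1/(k(d-1)+1)) * binomial (d*k) k`. -/
def fussCatalan (d k : ℕ) : ℕ := (d * k).choose k / (k * (d - 1) + 1)

/-- The power series `F = ∑_{k≥0} C_k^{(d)} X^{k(d-1)+1}` over `ℚ`: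
its `m`-th coefficient is `C_k^{(d)}` when `m = k(d-1)+1`, and `0` otherwise. -/
noncomputable def fussCatalanSeries (d : ℕ) : PowerSeries ℚ :=
  PowerSeries.mk fun m =>
    if m ≠ 0 ∧ (d - 1) ∣ (m - 1) then (fussCatalan d ((m - 1) / (d - 1)) : ℚ) else 0

open scoped Polynomial

section Contraction

variable {α : Type*} [CommRing α] {x : α}

theorem pow_dvd_pow_sub_pow_of_pow_dvd_sub {a b : α} (ha : x ∣ a) (hb : x ∣ b) {j : ℕ}
    (h : x ^ j ∣ a - b) (e : ℕ) : x ^ (e - 1 + j) ∣ a ^ e - b ^ e := by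
  rw [← geom_sum₂_mul, pow_add]
  refine mul_dvd_mul (Finset.dvd_sum fun i hi => ?_) h
  have hi : x ^ (e - 1) = x ^ i * x ^ (e - 1 - i) := by
    rw [← pow_add]; congr 1; rw [Finset.mem_range] at hi; omega
  rw [hi]
  exact mul_dvd_mul (pow_dvd_pow_of_dvd ha i) (pow_dvd_pow_of_dvd hb _)

theorem pow_dvd_iterate_sub_fixedPoint {c y : α} {u : ℕ → α} {d : ℕ} (hd : 2 ≤ d)
    (hu0 : u 0 = 0) (hu : ∀ n, u (n + 1) = u n ^ d + c) (hy : y = y ^ d + c) (hxy : x ∣ y)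
    (n : ℕ) : x ^ n ∣ u n - y := by
  have hxc : x ∣ c := by
    rw [eq_sub_of_add_eq' hy.symm]
    exact dvd_sub hxy (dvd_pow hxy (by omega))
  have hxu : ∀ n, x ∣ u n := by
    intro n
    induction n with
    | zero => simp [hu0]
    | succ n ih => rw [hu]; exact dvd_add (dvd_pow ih (by omega)) hxc
  induction n with
  | zero => simp
  | succ n ih =>
    have hsub : u (n + 1) - y = u n ^ d - y ^ d := by rw [hu]; linear_combination -1 * hy
    rw [hsub]
    exact (pow_dvd_pow x (by omega)).trans
      (pow_dvd_pow_sub_pow_of_pow_dvd_sub (hxu n) hxy ih d)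

end Contraction

theorem choose_succ_mul_succ (s i : ℕ) :
    (s * (i + 1) + i + 1).choose (i + 1) = (s + 1) * (s * (i + 1) + i).choose i := by
  refine Nat.eq_of_mul_eq_mul_right (by omega : 0 < i + 1) ?_
  rw [← Nat.add_one_mul_choose_eq]
  ring

theorem fussCatalan_succ_add_mul_choose (s i : ℕ) :
    fussCatalan (s + 1) (i + 1) + (s + 1) * ((s + 1) * (i + 1)).choose i =
      ((s + 1) * (i + 1) + 1).choose (i + 1) := by
  rw [fussCatalan, Nat.add_sub_cancel, Nat.choose_succ_succ']
  set a := ((s + 1) * (i + 1)).choose (i + 1)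
  set b := ((s + 1) * (i + 1)).choose i
  have hab : a * (i + 1) = b * ((i + 1) * s + 1) := by
    rw [Nat.choose_succ_right_eq]; congr 1; ring_nf; omega
  clear_value a b
  have hsb : s * b ≤ a := by nlinarith
  have ha : a = (a - s * b) * ((i + 1) * s + 1) := by
    zify [hsb] at hab ⊢; linear_combination (-(s : ℤ)) * hab
  rw [Nat.div_eq_of_eq_mul_left (by omega) ha]
  zify [hsb]
  ring

/-- Expanded by `X ↦ X ^ s`, this is `p' * (X / p) ^ (m + 1)` for `p = X - X ^ (s + 1)`. -/
noncomputable def lagrangeKernel (R : Type*) [CommRing R] (s m : ℕ) : R⟦X⟧ :=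
  (1 - C ((s : R) + 1) * X) * (invOneSubPow R (m + 1) : R⟦X⟧)

section LagrangeInversion

variable {R : Type*} [CommRing R]

theorem coeff_zero_lagrangeKernel (s m : ℕ) : coeff 0 (lagrangeKernel R s m) = 1 := by
  simp [lagrangeKernel, invOneSubPow_val_succ_eq_mk_add_choose]

theorem coeff_succ_lagrangeKernel (s m i : ℕ) :
    coeff (i + 1) (lagrangeKernel R s m) =
      ((m + i + 1).choose (i + 1) : R) - ((s : R) + 1) * ((m + i).choose i : R) := by
  rw [lagrangeKernel, sub_mul, one_mul, map_sub, mul_assoc, coeff_C_mul, coeff_succ_X_mul,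
    invOneSubPow_val_succ_eq_mk_add_choose, coeff_mk, coeff_mk, Nat.choose_symm_add,
    Nat.choose_symm_add, ← add_assoc]

theorem one_sub_pow_mul_lagrangeKernel_add (s n k : ℕ) :
    (1 - X) ^ k * lagrangeKernel R s (n + k) = lagrangeKernel R s n := by
  rw [lagrangeKernel, lagrangeKernel, mul_left_comm, Nat.add_right_comm,
    one_sub_pow_mul_invOneSubPow_val_add_eq_invOneSubPow_val]

theorem coeff_succ_lagrangeKernel_mul_succ (s i : ℕ) :
    coeff (i + 1) (lagrangeKernel R s (s * (i + 1))) = 0 := by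
  rw [coeff_succ_lagrangeKernel, choose_succ_mul_succ]
  push_cast
  ring

theorem coeff_lagrangeKernel_mul_add_one (s k : ℕ) :
    coeff k (lagrangeKernel R s (s * k + 1)) = fussCatalan (s + 1) k := by
  cases k with
  | zero => simp [coeff_zero_lagrangeKernel, fussCatalan]
  | succ i =>
    rw [coeff_succ_lagrangeKernel, show s * (i + 1) + 1 + i = (s + 1) * (i + 1) by ring,
      ← fussCatalan_succ_add_mul_choose]
    push_cast
    ring

theorem coeff_expand_lagrangeKernel_self {s : ℕ} (hs : s ≠ 0) (n : ℕ) :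
    coeff n (expand s hs (lagrangeKernel R s n)) = if n = 0 then 1 else 0 := by
  by_cases h : s ∣ n
  · obtain ⟨i, rfl⟩ := h
    rw [coeff_expand_mul]
    cases i with
    | zero => simp [coeff_zero_lagrangeKernel]
    | succ i => rw [coeff_succ_lagrangeKernel_mul_succ, if_neg (by positivity)]
  · rw [coeff_expand_of_not_dvd _ _ _ h, if_neg (by rintro rfl; exact h (dvd_zero s))]

theorem coeff_pow_mul_expand_lagrangeKernel {s : ℕ} (hs : s ≠ 0) (k m : ℕ) :
    coeff m ((X - X ^ (s + 1)) ^ k * expand s hs (lagrangeKernel R s m)) =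
      if k = m then 1 else 0 := by
  rcases le_or_gt k m with hkm | hmk
  · obtain ⟨n, rfl⟩ := Nat.exists_eq_add_of_le' hkm
    have hfactor : (X - X ^ (s + 1) : R⟦X⟧) ^ k * expand s hs (lagrangeKernel R s (n + k)) =
        X ^ k * expand s hs (lagrangeKernel R s n) := by
      rw [← one_sub_pow_mul_lagrangeKernel_add s n k, map_mul, map_pow, map_sub, map_one,
        expand_X, ← mul_assoc, ← mul_pow, pow_succ', mul_one_sub]
    rw [hfactor, coeff_X_pow_mul, coeff_expand_lagrangeKernel_self hs]
    simp
  · have hdvd :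
        (X : R⟦X⟧) ^ k ∣ (X - X ^ (s + 1)) ^ k * expand s hs (lagrangeKernel R s m) :=
      (pow_dvd_pow_of_dvd (dvd_sub dvd_rfl (dvd_pow_self X s.succ_ne_zero)) k).mul_right _
    rw [X_pow_dvd_iff.mp hdvd m hmk, if_neg hmk.ne']

theorem coeff_aeval_mul_expand_lagrangeKernel {s : ℕ} (hs : s ≠ 0) (q : R[X]) (m : ℕ) :
    coeff m (Polynomial.aeval (X - X ^ (s + 1) : R⟦X⟧) q * expand s hs (lagrangeKernel R s m)) =
      q.coeff m := by
  induction q using Polynomial.induction_on' with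
  | add p q hp hq => rw [map_add, add_mul, map_add, hp, hq, Polynomial.coeff_add]
  | monomial n a =>
    rw [Polynomial.aeval_monomial, Polynomial.coeff_monomial, mul_assoc,
      PowerSeries.algebraMap_apply, Algebra.algebraMap_self, RingHom.id_apply, coeff_C_mul,
      coeff_pow_mul_expand_lagrangeKernel hs, mul_ite, mul_one, mul_zero]

end LagrangeInversion

theorem coeff_X_mul_expand_lagrangeKernel {s : ℕ} (hs : s ≠ 0) (m : ℕ) :
    coeff m (X * expand s hs (lagrangeKernel ℚ s m)) =
      coeff m (fussCatalanSeries (s + 1)) := by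
  rw [fussCatalanSeries, coeff_mk, Nat.add_sub_cancel]
  cases m with
  | zero => simp
  | succ n =>
    rw [coeff_succ_X_mul, Nat.add_sub_cancel]
    by_cases h : s ∣ n
    · obtain ⟨k, rfl⟩ := h
      rw [coeff_expand_mul, if_pos ⟨Nat.succ_ne_zero _, dvd_mul_right s k⟩,
        Nat.mul_div_cancel_left k (Nat.pos_of_ne_zero hs), coeff_lagrangeKernel_mul_add_one]
    · rw [coeff_expand_of_not_dvd _ _ _ h, if_neg (fun h' => h h'.2)]

noncomputable def multibrotPoly (R : Type*) [CommRing R] (d : ℕ) : ℕ → R[X]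
  | 0 => 0
  | n + 1 => multibrotPoly R d n ^ d + Polynomial.X

theorem eq_coe_multibrotPoly {R : Type*} [CommRing R] {d : ℕ} {f : ℕ → R⟦X⟧}
    (h0 : f 0 = 0) (hrec : ∀ n, f (n + 1) = f n ^ d + X) (n : ℕ) :
    f n = (multibrotPoly R d n : R⟦X⟧) := by
  induction n with
  | zero => rw [h0, multibrotPoly, Polynomial.coe_zero]
  | succ n ih =>
    rw [hrec, ih, multibrotPoly, Polynomial.coe_add, Polynomial.coe_pow, Polynomial.coe_X]

/-- The iterates `f 0 = 0`, `f (n+1) = (f n)^d + X` of the `d`-multibrot polynomial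
converge coefficientwise to `F = ∑_{k≥0} C_k^{(d)} X^{k(d-1)+1}`. -/
theorem multibrot_iterates_tendsto_fussCatalanSeries (d : ℕ) (hd : 2 ≤ d)
    (f : ℕ → PowerSeries ℚ) (h0 : f 0 = 0)
    (hrec : ∀ n : ℕ, f (n + 1) = (f n) ^ d + X) :
    ∀ m : ℕ, ∃ N : ℕ, ∀ n ≥ N,
      coeff m (f n) = coeff m (fussCatalanSeries d) := by
  obtain ⟨s, rfl⟩ : ∃ s, d = s + 1 := ⟨d - 1, by omega⟩
  have hs : s ≠ 0 := by omega
  set y : ℕ → ℚ⟦X⟧ := fun n =>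
    Polynomial.aeval (X - X ^ (s + 1)) (multibrotPoly ℚ (s + 1) n)
  have hy : ∀ n, X ^ n ∣ y n - X :=
    pow_dvd_iterate_sub_fixedPoint (c := X - X ^ (s + 1)) hd (map_zero _)
      (fun n => by simp [y, multibrotPoly]) (by ring) dvd_rfl
  intro m
  refine ⟨m + 1, fun n hn => ?_⟩
  set E := expand s hs (lagrangeKernel ℚ s m)
  have hvanish : coeff m ((y n - X) * E) = 0 :=
    X_pow_dvd_iff.mp (((pow_dvd_pow X hn).trans (hy n)).mul_right E) m (by omega)
  calc coeff m (f n) = coeff m (y n * E) := by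
        rw [eq_coe_multibrotPoly h0 hrec, Polynomial.coeff_coe,
          coeff_aeval_mul_expand_lagrangeKernel hs]
    _ = coeff m (X * E) := by rw [← sub_eq_zero, ← map_sub, ← sub_mul, hvanish]
    _ = coeff m (fussCatalanSeries (s + 1)) := coeff_X_mul_expand_lagrangeKernel hs m
end

section
/- The generating function of the Catalan numbers C(x) = \sum_{k≥0} C_k x^k satisfies x*C(x)^2 - C(x) + 1 = 0 as formal power series; equivalently, the series z = \sum_{k≥0} C_k x^{k+1} satisfies z = z^2 + x. -/
open PowerSeries

lemma catalan_gf_key :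
    X * (PowerSeries.mk fun k => (catalan k : ℚ)) ^ 2
        - PowerSeries.mk (fun k => (catalan k : ℚ)) + 1 = 0 := by
  ext n
  cases n with
  | zero => simp
  | succ n =>
    simp only [map_add, map_sub, coeff_one, Nat.succ_ne_zero, if_false,
      coeff_mk, sq]
    rw [coeff_succ_X_mul, coeff_mul, catalan_succ']
    push_cast
    simp [coeff_mk]

/-- The generating function `C(x) = ∑_{k≥0} catalan k * x^k` of the Catalan numbers
satisfies `x*C(x)^2 - C(x) + 1 = 0`; equivalently `z = ∑_{k≥0} catalan k * x^{k+1}`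
satisfies `z = z^2 + x`. -/
theorem catalan_generating_function :
    (X * (PowerSeries.mk fun k => (catalan k : ℚ)) ^ 2
        - PowerSeries.mk (fun k => (catalan k : ℚ)) + 1 = 0) ∧
    (X * PowerSeries.mk (fun k => (catalan k : ℚ)) =
      (X * PowerSeries.mk fun k => (catalan k : ℚ)) ^ 2 + X) := by
  refine ⟨catalan_gf_key, ?_⟩
  have h := catalan_gf_key
  have hC : PowerSeries.mk (fun k => (catalan k : ℚ)) =
      X * (PowerSeries.mk fun k => (catalan k : ℚ)) ^ 2 + 1 := by linear_combination -h
  calc X * PowerSeries.mk (fun k => (catalan k : ℚ))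
      = X * (X * (PowerSeries.mk fun k => (catalan k : ℚ)) ^ 2 + 1) := by rw [← hC]
    _ = (X * PowerSeries.mk fun k => (catalan k : ℚ)) ^ 2 + X := by ring
end

section
/- Lagrange inversion for formal power series: let x = z(1 - \sum_{n≥1} b_n z^n) as formal power series in z, and let z = x(1 + \sum_{n≥1} a_n x^n) be its compositional inverse. Then a_n = (1/(n+1)) \sum_{λ} binomial(n+k, k) * multinomial(k; k_1,...,k_n) * \prod_{j=1}^{n} b_j^{k_j}, where the sum is over all tuples (k_1,...,k_n) of nonnegative integers with \sum_j k_j = k and \sum_j j*k_j = n. -/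
/-!
Write `F = revSeries a` and `B = ∑_{n ≥ 1} b_n z^n`. The hypothesis says `F · v = X` with
`v = (1 - B) ∘ F`, i.e. `F` is the compositional inverse of `z (1 - B(z))`. Differentiating
`F v = X` gives the residue identity `[x^j] F' v^{j+1} = δ_{j0}`. Multiplying `F'` by
`v^{n+1} · ((1 - B)^{-(n+1)} ∘ F) = 1` and expanding the composition as `∑_d c_d F^d` with
`F^d v^d = X^d`, the residue identity picks out `[x^n] F' = c_n = [z^n] (1 - B)^{-(n+1)}`.
Finally `(1 - B)^{-(n+1)} = ∑_k C(n+k, k) B^k`, and `[z^n] B^k` is a sum of multinomial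
coefficients over the partitions of `n` with `k` parts.
-/

open PowerSeries

/-- The finite set of tuples `(k_1, …, k_n)` of nonnegative integers with
`∑ j, j * k_j = n` (indexed by `j : Fin n`, part size `j+1`). -/
def partitionTuples (n : ℕ) : Finset (Fin n → ℕ) :=
  (Fintype.piFinset fun _ : Fin n => Finset.range (n + 1)).filter
    fun v => ∑ j : Fin n, ((j : ℕ) + 1) * v j = n

/-- The series `z = x(1 + ∑_{n≥1} a_n x^n)`. -/
noncomputable def revSeries (a : ℕ → ℚ) : PowerSeries ℚ :=
  PowerSeries.mk fun m => if m = 0 then 0 else if m = 1 then 1 else a (m - 1)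

open Finset

namespace PowerSeries

section CommRing

variable {R : Type*} [CommRing R]

theorem coeff_mul_pow_eq_zero_of_lt {F : R⟦X⟧} (hF : constantCoeff F = 0) (P : R⟦X⟧)
    {n d : ℕ} (h : n < d) : coeff n (P * F ^ d) = 0 :=
  X_pow_dvd_iff.mp (dvd_mul_of_dvd_right (pow_dvd_pow_of_dvd (X_dvd_iff.mpr hF) d) P) n h

theorem subst_one_of_hasSubst {F : R⟦X⟧} (hF : HasSubst F) : (1 : R⟦X⟧).subst F = 1 := by
  rw [← coe_substAlgHom hF, map_one]

theorem coeff_mul_subst {F : R⟦X⟧} (hF : HasSubst F) (P G : R⟦X⟧) (n : ℕ) :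
    coeff n (P * G.subst F) = ∑ᶠ d, coeff d G * coeff n (P * F ^ d) := by
  have hfin (m : ℕ) := coeff_subst_finite' hF G m
  simp only [smul_eq_mul] at hfin
  simp_rw [coeff_mul, coeff_subst' hF, smul_eq_mul, mul_finsum' _ _ (hfin _)]
  rw [sum_finsum_comm _ _ fun p _ => (hfin p.2).mul_right fun _ => coeff p.1 P]
  simp_rw [mul_sum, mul_left_comm]

theorem coeff_pow_eq_of_X_pow_dvd_sub {f g : R⟦X⟧} {n : ℕ} (h : X ^ (n + 1) ∣ f - g)
    (k : ℕ) :
    coeff n (f ^ k) = coeff n (g ^ k) :=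
  sub_eq_zero.mp <| by
    rw [← map_sub]
    exact X_pow_dvd_iff.mp (h.trans (sub_dvd_pow_sub_pow f g k)) n n.lt_succ_self

theorem coeff_sum_C_mul_X_pow_pow {ι : Type*} [Fintype ι] [DecidableEq ι] (c : ι → R)
    (e : ι → ℕ) (n k : ℕ) :
    coeff n ((∑ i, C (c i) * X ^ e i) ^ k) =
      ∑ w ∈ (univ.piAntidiag k).filter (fun w => ∑ i, e i * w i = n),
        (Nat.multinomial univ w : R) * ∏ i, c i ^ w i := by
  have hterm (w : ι → ℕ) : ∏ i, (C (c i) * X ^ e i) ^ w i =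
      C (∏ i, c i ^ w i) * X ^ ∑ i, e i * w i := by
    simp_rw [mul_pow, prod_mul_distrib, ← pow_mul, prod_pow_eq_pow_sum, map_prod, map_pow]
  simp_rw [sum_pow_eq_sum_piAntidiag, map_sum, hterm, ← mul_assoc, ← map_natCast C, ← map_mul,
    coeff_C_mul_X_pow, sum_filter, eq_comm]

theorem subst_mk_choose_mul_one_sub_pow {B : R⟦X⟧} (hB : HasSubst B) (d : ℕ) :
    (mk fun k => ((d + k).choose k : R)).subst B * (1 - B) ^ (d + 1) = 1 := by
  have hsymm : (mk fun k => ((d + k).choose k : R)) = mk fun k => ((d + k).choose d : R) := by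
    ext k
    rw [coeff_mk, coeff_mk, Nat.choose_symm_add]
  have h := congrArg (subst B) (mk_add_choose_mul_one_sub_pow_eq_one R d)
  rwa [← hsymm, subst_mul hB, subst_pow hB, subst_sub hB, subst_X hB,
    subst_one_of_hasSubst hB] at h

noncomputable def seriesFromOne (b : ℕ → R) : R⟦X⟧ :=
  mk fun d => if d = 0 then 0 else b d

theorem constantCoeff_seriesFromOne (b : ℕ → R) : constantCoeff (seriesFromOne b) = 0 := by
  simp [seriesFromOne, ← coeff_zero_eq_constantCoeff_apply]

theorem X_pow_succ_dvd_seriesFromOne_sub (b : ℕ → R) (n : ℕ) :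
    X ^ (n + 1) ∣ seriesFromOne b - ∑ j : Fin n, C (b (j + 1)) * X ^ ((j : ℕ) + 1) := by
  refine X_pow_dvd_iff.mpr fun i hi => ?_
  rw [map_sub, map_sum, Fin.sum_univ_eq_sum_range (fun j => coeff i (C (b (j + 1)) * X ^ (j + 1)))]
  simp_rw [coeff_C_mul_X_pow, seriesFromOne, coeff_mk]
  rcases i with _ | i
  · simp
  · simp [show i < n by omega]

theorem coeff_seriesFromOne_pow (b : ℕ → R) (n k : ℕ) :
    coeff n (seriesFromOne b ^ k) =
      ∑ v ∈ (partitionTuples n).filter (fun v => ∑ j, v j = k),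
        (Nat.multinomial univ v : R) * ∏ j : Fin n, b (j + 1) ^ v j := by
  rw [coeff_pow_eq_of_X_pow_dvd_sub (X_pow_succ_dvd_seriesFromOne_sub b n),
    coeff_sum_C_mul_X_pow_pow]
  refine sum_congr (Finset.ext fun w => ?_) fun _ _ => rfl
  simp only [mem_filter, mem_piAntidiag, partitionTuples, Fintype.mem_piFinset, mem_range,
    mem_univ, implies_true, and_true]
  constructor
  · rintro ⟨hk, hn⟩
    refine ⟨⟨fun j => ?_, hn⟩, hk⟩
    have := single_le_sum (f := fun j : Fin n => ((j : ℕ) + 1) * w j) (by simp) (mem_univ j)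
    exact Nat.lt_succ_of_le ((Nat.le_mul_of_pos_left _ j.succ_pos).trans (this.trans_eq hn))
  · rintro ⟨⟨-, hn⟩, hk⟩
    exact ⟨hk, hn⟩

theorem coeff_subst_seriesFromOne (b c : ℕ → R) (n : ℕ) :
    coeff n ((mk c).subst (seriesFromOne b)) =
      ∑ v ∈ partitionTuples n, c (∑ j, v j) * (Nat.multinomial univ v : R) *
        ∏ j : Fin n, b (j + 1) ^ v j := by
  rw [coeff_subst' (HasSubst.of_constantCoeff_zero' (constantCoeff_seriesFromOne b))]
  simp_rw [coeff_mk, smul_eq_mul, coeff_seriesFromOne_pow, mul_sum]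
  rw [← finsum_sum_filter (fun v => ∑ j, v j)]
  refine finsum_congr fun k => sum_congr rfl fun v hv => ?_
  rw [(mem_filter.mp hv).2, mul_assoc]

theorem mk_sum_Icc_coeff_pow_eq_mul_subst (b : ℕ → R) {F : R⟦X⟧}
    (hF : constantCoeff F = 0) :
    mk (fun m => ∑ n ∈ Icc 1 m, b n * coeff m (F ^ (n + 1))) =
      F * (seriesFromOne b).subst F := by
  ext m
  rw [coeff_mk, coeff_mul_subst (HasSubst.of_constantCoeff_zero' hF),
    finsum_eq_sum_of_support_subset (s := Icc 1 m)]
  · refine sum_congr rfl fun d hd => ?_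
    rw [seriesFromOne, coeff_mk, if_neg (by simp at hd; omega), pow_succ']
  · intro d hd
    rw [Function.mem_support] at hd
    refine mem_Icc.mpr ⟨Nat.one_le_iff_ne_zero.mpr fun h0 => hd ?_, not_lt.mp fun hlt => hd ?_⟩
    · simp [h0, seriesFromOne]
    · rw [coeff_mul_pow_eq_zero_of_lt hF _ hlt, mul_zero]

end CommRing

section TorsionFree

variable {R : Type*} [CommRing R] [IsAddTorsionFree R]

theorem coeff_derivative_mul_pow_succ {F v : R⟦X⟧} (hF : constantCoeff F = 0)
    (hFv : F * v = X) (j : ℕ) :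
    coeff j (d⁄dX R F * v ^ (j + 1)) = if j = 0 then 1 else 0 := by
  have hD : F * d⁄dX R v + v * d⁄dX R F = 1 := by
    simpa using congrArg (d⁄dX R) hFv
  rcases j with _ | i
  · have h0 := congrArg constantCoeff hD
    simp only [map_add, map_mul, hF, zero_mul, zero_add, map_one] at h0
    simpa [mul_comm] using h0
  · have hsplit : d⁄dX R F * v ^ (i + 1 + 1) = v ^ (i + 1) - X * (d⁄dX R v * v ^ i) := by
      linear_combination v ^ (i + 1) * hD - d⁄dX R v * v ^ i * hFv
    have hpow : coeff i (d⁄dX R v * v ^ i) = coeff (i + 1) (v ^ (i + 1)) := by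
      have h := congrArg (coeff i) ((d⁄dX R).leibniz_pow v (i + 1))
      rw [coeff_derivative, map_nsmul, smul_eq_mul, Nat.add_sub_cancel, mul_comm (v ^ i),
        nsmul_eq_mul] at h
      refine IsAddTorsionFree.nsmul_right_injective i.succ_ne_zero (?_ : (i + 1) • _ = _)
      simp only [nsmul_eq_mul]
      push_cast at h ⊢
      linear_combination -h
    rw [hsplit, map_sub, coeff_succ_X_mul, hpow, sub_self, if_neg i.succ_ne_zero]

theorem coeff_derivative_mul_pow_mul_pow {F v : R⟦X⟧} (hF : constantCoeff F = 0)
    (hFv : F * v = X) (n d : ℕ) :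
    coeff n (d⁄dX R F * v ^ (n + 1) * F ^ d) = if d = n then 1 else 0 := by
  rcases le_or_gt d n with hd | hd
  · obtain ⟨j, rfl⟩ := Nat.exists_eq_add_of_le' hd
    have h : d⁄dX R F * v ^ (j + d + 1) * F ^ d = X ^ d * (d⁄dX R F * v ^ (j + 1)) := by
      rw [← hFv]; ring
    rw [h, coeff_X_pow_mul, coeff_derivative_mul_pow_succ hF hFv]
    simp
  · rw [if_neg hd.ne', coeff_mul_pow_eq_zero_of_lt hF _ hd]

theorem coeff_derivative_eq_of_mul_pow_eq_one {F ψ Φ : R⟦X⟧} (hF : constantCoeff F = 0)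
    (hFψ : F * ψ.subst F = X) {n : ℕ} (hΦ : Φ * ψ ^ (n + 1) = 1) :
    coeff n (d⁄dX R F) = coeff n Φ := by
  have hs := HasSubst.of_constantCoeff_zero' hF
  have h : d⁄dX R F = d⁄dX R F * (ψ.subst F) ^ (n + 1) * Φ.subst F := by
    rw [mul_assoc, ← subst_pow hs, ← subst_mul hs, mul_comm (ψ ^ (n + 1)), hΦ,
      subst_one_of_hasSubst hs, mul_one]
  rw [h, coeff_mul_subst hs]
  simp_rw [coeff_derivative_mul_pow_mul_pow hF hFψ, mul_ite, mul_one, mul_zero]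
  rw [finsum_eq_single _ n fun d hd => if_neg hd, if_pos rfl]

end TorsionFree

end PowerSeries

theorem constantCoeff_revSeries (a : ℕ → ℚ) : constantCoeff (revSeries a) = 0 := by
  simp [revSeries, ← coeff_zero_eq_constantCoeff_apply]

theorem coeff_succ_revSeries (a : ℕ → ℚ) {n : ℕ} (hn : 1 ≤ n) :
    coeff (n + 1) (revSeries a) = a n := by
  simp [revSeries, show n ≠ 0 by omega]

/-- Lagrange inversion: if `z = x(1 + ∑_{n≥1} a_n x^n)` is the compositional
inverse of `x = z(1 - ∑_{n≥1} b_n z^n)`, i.e. `F - ∑_{n≥1} b_n F^{n+1} = X`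
(the sum being computed coefficientwise, where only finitely many terms
contribute to each coefficient since `F` has zero constant term), then
`a_n = (1/(n+1)) ∑_λ C(n+k,k) ⬝ multinomial(k; k_1,…,k_n) ⬝ ∏_j b_j^{k_j}`,
summed over tuples `(k_1,…,k_n)` with `∑ j*k_j = n`, where `k = ∑ k_j`. -/
theorem lagrange_inversion (a b : ℕ → ℚ)
    (hinv : revSeries a = X + PowerSeries.mk
      (fun m => ∑ n ∈ Finset.Icc 1 m, b n * coeff m ((revSeries a) ^ (n + 1)))) :
    ∀ n : ℕ, 1 ≤ n →
      a n = (1 / ((n : ℚ) + 1)) * ∑ v ∈ partitionTuples n,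
        (((n + ∑ j, v j).choose (∑ j, v j) : ℕ) : ℚ) *
          ((Nat.multinomial Finset.univ v : ℕ) : ℚ) *
          ∏ j : Fin n, (b ((j : ℕ) + 1)) ^ (v j) := by
  intro n hn
  have hF := constantCoeff_revSeries a
  have hs := HasSubst.of_constantCoeff_zero' hF
  have hfun : revSeries a * (1 - seriesFromOne b).subst (revSeries a) = X := by
    rw [subst_sub hs, subst_one_of_hasSubst hs, mul_sub, mul_one,
      ← mk_sum_Icc_coeff_pow_eq_mul_subst b hF]
    exact sub_eq_of_eq_add hinv
  have hΦ := subst_mk_choose_mul_one_sub_pow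
    (HasSubst.of_constantCoeff_zero' (constantCoeff_seriesFromOne b)) (R := ℚ) n
  have key := coeff_derivative_eq_of_mul_pow_eq_one hF hfun hΦ
  rw [coeff_derivative, coeff_succ_revSeries a hn, coeff_subst_seriesFromOne] at key
  rw [← key]
  field_simp
end

section
/- Let 2 ≤ d_1 < d_2 < ... < d_r be integers, and let z = \sum_{n≥0} a_n x^{n+1} be the compositional inverse of x = z - \sum_{i=1}^{r} z^{d_i}. Then a_n = \sum_{λ} (1/(n+1)) * binomial(n+k, k) * multinomial(k; k_{d_1-1},...,k_{d_r-1}), where the sum is over all tuples (k_{d_1-1},...,k_{d_r-1}) of nonnegative integers with \sum_i (d_i - 1) k_{d_i-1} = n, and k = \sum_i k_{d_i-1}. -/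
/-!
Write `F = coeffSeries a`. The hypothesis says `F * V(F) = X` for the polynomial
`V = 1 - ∑ᵢ X ^ (dᵢ - 1)`, so Lagrange inversion gives
`(n + 1) aₙ = [Xⁿ] V⁻¹ ^ (n + 1)`.
Lagrange inversion itself rests on the residue identity
`[Xⁿ] F ^ m (F / X)⁻¹ ^ (n + 1) F' = δₘₙ`, applied to a polynomial truncation of
`V⁻¹ ^ (n + 1)`, so that only polynomials are ever evaluated at `F`.
Finally `(1 - u)⁻¹ ^ (n + 1) = ∑ₖ C(n + k, k) uᵏ` for `u = ∑ᵢ X ^ (dᵢ - 1)`, and the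
multinomial theorem expands `[Xⁿ] uᵏ`.
-/

open PowerSeries

/-- The series `z = ∑_{n≥0} a_n x^{n+1}`. -/
noncomputable def coeffSeries (a : ℕ → ℚ) : PowerSeries ℚ :=
  PowerSeries.mk fun m => if m = 0 then 0 else a (m - 1)

open Finset
open scoped Polynomial

section CommRing

variable {R : Type*} [CommRing R]

theorem coeff_eq_of_X_pow_succ_dvd_sub {f g : R⟦X⟧} {n : ℕ} (h : X ^ (n + 1) ∣ f - g) :
    coeff n f = coeff n g := by
  simpa [sub_eq_zero] using X_pow_dvd_iff.mp h n (Nat.lt_succ_self n)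

theorem X_pow_dvd_aeval_trunc_mul_aeval_sub_one {W : R⟦X⟧} {V : R[X]} (hW : W * V = 1)
    {G : R⟦X⟧} (hG : constantCoeff G = 0) (k : ℕ) :
    X ^ k ∣ Polynomial.aeval G (trunc k W) * Polynomial.aeval G V - 1 := by
  have hpoly : Polynomial.X ^ k ∣ trunc k W * V - 1 := by
    have htrunc : X ^ k ∣ (trunc k W : R⟦X⟧) - W :=
      X_pow_dvd_iff.mpr fun m hm => by simp [coeff_trunc, hm]
    have hcoe : ((trunc k W * V - 1 : R[X]) : R⟦X⟧) = ((trunc k W : R⟦X⟧) - W) * V := by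
      push_cast
      linear_combination hW
    refine Polynomial.X_pow_dvd_iff.mpr fun m hm => ?_
    rw [← Polynomial.coeff_coe, hcoe]
    exact X_pow_dvd_iff.mp (dvd_mul_of_dvd_left htrunc _) m hm
  obtain ⟨Q, hQ⟩ := hpoly
  obtain ⟨G', rfl⟩ := X_dvd_iff.mpr hG
  refine ⟨G' ^ k * Polynomial.aeval (X * G') Q, ?_⟩
  rw [← map_mul, ← map_one (Polynomial.aeval (R := R) (X * G')), ← map_sub, hQ, map_mul,
    map_pow, Polynomial.aeval_X, mul_pow, mul_assoc]

theorem constantCoeff_aeval_of_constantCoeff_eq_zero {G : R⟦X⟧} (hG : constantCoeff G = 0)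
    (p : R[X]) : constantCoeff (Polynomial.aeval G p) = constantCoeff (p : R⟦X⟧) := by
  rw [Polynomial.aeval_def, Polynomial.hom_eval₂, hG, Polynomial.constantCoeff_coe,
    Polynomial.coeff_zero_eq_eval_zero]
  simp [Polynomial.eval₂_at_zero, Polynomial.eval]

end CommRing

section Combinatorics

variable {ι : Type*} [Fintype ι] [DecidableEq ι]

theorem coeff_sum_X_pow_pow {R : Type*} [CommSemiring R] (w : ι → ℕ) (k n : ℕ) :
    coeff n ((∑ i, (X : R⟦X⟧) ^ w i) ^ k) =
      ∑ v ∈ univ.piAntidiag k with ∑ i, w i * v i = n, (Nat.multinomial univ v : R) := by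
  rw [sum_pow_eq_sum_piAntidiag, map_sum, sum_filter]
  refine sum_congr rfl fun v _ => ?_
  simp_rw [← map_natCast (C (R := R)), ← pow_mul, prod_pow_eq_pow_sum, coeff_C_mul, coeff_X_pow,
    mul_ite, mul_one, mul_zero, eq_comm]

theorem sum_range_sum_piAntidiag_filter {M : Type*} [AddCommMonoid M] {w : ι → ℕ}
    (hw : ∀ i, w i ≠ 0) (n : ℕ) (f : (ι → ℕ) → M) :
    ∑ k ∈ range (n + 1), ∑ v ∈ univ.piAntidiag k with ∑ i, w i * v i = n, f v =
      ∑ v ∈ (Fintype.piFinset fun _ => range (n + 1)) with ∑ i, w i * v i = n, f v := by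
  have hle : ∀ v : ι → ℕ, ∑ i, v i ≤ ∑ i, w i * v i := fun v =>
    sum_le_sum fun i _ => Nat.le_mul_of_pos_left _ (Nat.pos_of_ne_zero (hw i))
  rw [← sum_fiberwise_of_maps_to (g := fun v : ι → ℕ => ∑ i, v i) (t := range (n + 1))]
  · refine sum_congr rfl fun k _ => sum_congr ?_ fun _ _ => rfl
    ext v
    simp only [mem_filter, mem_piAntidiag, Fintype.mem_piFinset, mem_range, mem_univ,
      implies_true, and_true]
    constructor
    · rintro ⟨rfl, hv⟩
      refine ⟨⟨fun i => ?_, hv⟩, rfl⟩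
      have := single_le_sum (fun j _ => Nat.zero_le (v j)) (mem_univ i)
      have := hle v
      omega
    · rintro ⟨⟨-, hv⟩, rfl⟩
      exact ⟨rfl, hv⟩
  · intro v hv
    have := hle v
    simp only [mem_filter] at hv
    simp only [mem_range]
    omega

end Combinatorics

section Field

variable {K : Type*} [Field K]

theorem coeff_inv_one_sub_pow_succ {u : K⟦X⟧} (hu : constantCoeff u = 0) (n : ℕ) :
    coeff n ((1 - u)⁻¹ ^ (n + 1)) =
      ∑ k ∈ range (n + 1), ((n + k).choose k : K) * coeff n (u ^ k) := by
  set B := trunc (n + 1) (mk fun j => ((n + j).choose n : K))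
  have hB : X ^ (n + 1) ∣ Polynomial.aeval u B * (1 - u) ^ (n + 1) - 1 := by
    have := X_pow_dvd_aeval_trunc_mul_aeval_sub_one (V := (1 - Polynomial.X) ^ (n + 1))
      (by simpa using mk_add_choose_mul_one_sub_pow_eq_one K n) hu (n + 1)
    rwa [map_pow, map_sub, map_one, Polynomial.aeval_X] at this
  have hinv : (1 - u) ^ (n + 1) * (1 - u)⁻¹ ^ (n + 1) = 1 := by
    rw [← mul_pow, PowerSeries.mul_inv_cancel _ (by simp [hu]), one_pow]
  calc coeff n ((1 - u)⁻¹ ^ (n + 1)) = coeff n (Polynomial.aeval u B) := by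
        refine (coeff_eq_of_X_pow_succ_dvd_sub ?_).symm
        have : Polynomial.aeval u B - (1 - u)⁻¹ ^ (n + 1) =
            (Polynomial.aeval u B * (1 - u) ^ (n + 1) - 1) * (1 - u)⁻¹ ^ (n + 1) := by
          linear_combination -(Polynomial.aeval u B) * hinv
        exact this ▸ dvd_mul_of_dvd_left hB _
    _ = ∑ k ∈ range (n + 1), ((n + k).choose k : K) * coeff n (u ^ k) := by
        rw [Polynomial.aeval_eq_sum_range' (natDegree_trunc_lt _ n), map_sum]
        refine sum_congr rfl fun k hk => ?_
        rw [map_smul, smul_eq_mul, coeff_trunc, if_pos (mem_range.mp hk), coeff_mk,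
          Nat.choose_symm_add]

variable [CharZero K]

theorem coeff_inv_pow_add_coeff_derivative_mul_inv_pow (E : K⟦X⟧) (k : ℕ) :
    coeff (k + 1) (E⁻¹ ^ (k + 1)) + coeff k (d⁄dX K E * E⁻¹ ^ (k + 2)) = 0 := by
  have h := coeff_derivative (E⁻¹ ^ (k + 1)) k
  have hder : d⁄dX K (E⁻¹ ^ (k + 1)) = C (-(k + 1 : K)) * (d⁄dX K E * E⁻¹ ^ (k + 2)) := by
    rw [derivative_pow, derivative_inv', map_neg, map_add, map_natCast, map_one]
    push_cast
    ring
  rw [hder, coeff_C_mul] at h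
  have hsum : (coeff (k + 1) (E⁻¹ ^ (k + 1)) + coeff k (d⁄dX K E * E⁻¹ ^ (k + 2))) *
      (k + 1 : K) = 0 := by
    linear_combination -h
  exact (mul_eq_zero.mp hsum).resolve_right (Nat.cast_add_one_ne_zero k)

/-- Up to the factor `X ^ (n + 1)`, this is the residue of `F ^ (m - n - 1) * F'` for `F = X * E`;
for `m ≠ n` that is a derivative, which has no `X⁻¹` term. -/
theorem coeff_mul_pow_mul_inv_pow_mul_derivative {E : K⟦X⟧} (hE : constantCoeff E ≠ 0)
    (m n : ℕ) :
    coeff n ((X * E) ^ m * E⁻¹ ^ (n + 1) * d⁄dX K (X * E)) = if m = n then 1 else 0 := by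
  have hcancel : ∀ a b, E ^ a * E⁻¹ ^ (a + b) = E⁻¹ ^ b := fun a b => by
    rw [pow_add, ← mul_assoc, ← mul_pow, PowerSeries.mul_inv_cancel E hE, one_pow, one_mul]
  have hexpand : (X * E) ^ m * E⁻¹ ^ (n + 1) * d⁄dX K (X * E) =
      X ^ m * (E ^ (m + 1) * E⁻¹ ^ (n + 1)) +
        X ^ (m + 1) * (d⁄dX K E * (E ^ m * E⁻¹ ^ (n + 1))) := by
    rw [Derivation.leibniz, derivative_X, smul_eq_mul, smul_eq_mul]
    ring
  rcases lt_trichotomy m n with hlt | rfl | hgt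
  · obtain ⟨k, rfl⟩ : ∃ k, n = m + (k + 1) := ⟨n - m - 1, by omega⟩
    rw [if_neg (by omega), hexpand, show m + (k + 1) + 1 = m + 1 + (k + 1) by ring, hcancel,
      show m + 1 + (k + 1) = m + (k + 2) by ring, hcancel, map_add,
      show m + (k + 1) = k + 1 + m by ring, coeff_X_pow_mul, show k + 1 + m = k + (m + 1) by ring,
      coeff_X_pow_mul]
    exact coeff_inv_pow_add_coeff_derivative_mul_inv_pow E k
  · have hone : E ^ (m + 1) * E⁻¹ ^ (m + 1) = 1 := by
      rw [← mul_pow, PowerSeries.mul_inv_cancel E hE, one_pow]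
    rw [if_pos rfl, hexpand, hone, mul_one, map_add, coeff_X_pow_self, coeff_X_pow_mul',
      if_neg (by omega), add_zero]
  · rw [if_neg (by omega), mul_pow, mul_assoc, mul_assoc, coeff_X_pow_mul', if_neg (by omega)]

theorem coeff_aeval_mul_inv_pow_mul_derivative {E : K⟦X⟧} (hE : constantCoeff E ≠ 0)
    (p : K[X]) (n : ℕ) :
    coeff n (Polynomial.aeval (X * E) p * E⁻¹ ^ (n + 1) * d⁄dX K (X * E)) = p.coeff n := by
  rw [Polynomial.aeval_eq_sum_range' (n := p.natDegree + n + 1) (by omega), sum_mul, sum_mul,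
    map_sum]
  simp_rw [smul_mul_assoc, map_smul, coeff_mul_pow_mul_inv_pow_mul_derivative hE, smul_eq_mul,
    mul_ite, mul_one, mul_zero]
  rw [sum_ite_eq', if_pos (mem_range.mpr (by omega))]

theorem coeff_succ_mul_eq_coeff_inv_pow_of_mul_aeval_eq_X (V : K[X]) {F : K⟦X⟧}
    (hF : constantCoeff F = 0) (hFV : F * Polynomial.aeval F V = X) (n : ℕ) :
    coeff (n + 1) F * (n + 1) = coeff n ((V : K⟦X⟧)⁻¹ ^ (n + 1)) := by
  obtain ⟨E, rfl⟩ := X_dvd_iff.mpr hF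
  have hEV : E * Polynomial.aeval (X * E) V = 1 :=
    mul_left_cancel₀ X_ne_zero (by rw [← mul_assoc, hFV, mul_one])
  have hEV0 := congrArg constantCoeff hEV
  rw [map_mul, map_one] at hEV0
  have hE : constantCoeff E ≠ 0 := left_ne_zero_of_mul_eq_one hEV0
  have hV : constantCoeff (V : K⟦X⟧) ≠ 0 := by
    rw [← constantCoeff_aeval_of_constantCoeff_eq_zero hF]
    exact right_ne_zero_of_mul_eq_one hEV0
  have hEinv : Polynomial.aeval (X * E) V = E⁻¹ := by
    rw [PowerSeries.eq_inv_iff_mul_eq_one hE, mul_comm, hEV]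
  -- `T` stands in for `V⁻¹ ^ (n + 1)`: as a polynomial it can be evaluated at `X * E`.
  set T := trunc (n + 1) ((V : K⟦X⟧)⁻¹ ^ (n + 1))
  have hT : X ^ (n + 1) ∣ Polynomial.aeval (X * E) T * E⁻¹ ^ (n + 1) - 1 := by
    have := X_pow_dvd_aeval_trunc_mul_aeval_sub_one (V := V ^ (n + 1))
      (by rw [Polynomial.coe_pow, ← mul_pow, PowerSeries.inv_mul_cancel _ hV, one_pow]) hF (n + 1)
    rwa [map_pow (Polynomial.aeval (X * E)) V, hEinv] at this
  calc coeff (n + 1) (X * E) * (n + 1) = coeff n (d⁄dX K (X * E)) :=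
        (coeff_derivative _ n).symm
    _ = coeff n (Polynomial.aeval (X * E) T * E⁻¹ ^ (n + 1) * d⁄dX K (X * E)) := by
        refine coeff_eq_of_X_pow_succ_dvd_sub ?_
        rw [← one_sub_mul, ← neg_sub, neg_mul, dvd_neg]
        exact dvd_mul_of_dvd_left hT _
    _ = coeff n ((V : K⟦X⟧)⁻¹ ^ (n + 1)) := by
        rw [coeff_aeval_mul_inv_pow_mul_derivative hE, coeff_trunc, if_pos (Nat.lt_succ_self n)]

theorem coeff_succ_mul_eq_sum_of_sub_sum_pow_eq_X {ι : Type*} [Fintype ι] [DecidableEq ι]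
    {w : ι → ℕ} (hw : ∀ i, w i ≠ 0) {F : K⟦X⟧} (hF : constantCoeff F = 0)
    (hFw : F - ∑ i, F ^ (w i + 1) = X) (n : ℕ) :
    coeff (n + 1) F * (n + 1) = ∑ k ∈ range (n + 1),
      ∑ v ∈ univ.piAntidiag k with ∑ i, w i * v i = n,
        ((n + k).choose k : K) * (Nat.multinomial univ v : K) := by
  set V : K[X] := 1 - ∑ i, Polynomial.X ^ w i
  have hFV : F * Polynomial.aeval F V = X := by
    rw [← hFw]
    simp only [V, map_sub, map_one, map_sum, map_pow, Polynomial.aeval_X, mul_sub, mul_one,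
      mul_sum, ← pow_succ']
  have hVu : (V : K⟦X⟧) = 1 - ∑ i, X ^ w i := by
    rw [Polynomial.coe_sub, Polynomial.coe_one, ← Polynomial.coeToPowerSeries.ringHom_apply,
      map_sum]
    simp [Polynomial.coeToPowerSeries.ringHom_apply]
  have hu : constantCoeff (∑ i, X ^ w i : K⟦X⟧) = 0 := by
    simp only [map_sum, map_pow, constantCoeff_X]
    exact sum_eq_zero fun i _ => zero_pow (hw i)
  rw [coeff_succ_mul_eq_coeff_inv_pow_of_mul_aeval_eq_X V hF hFV, hVu,
    coeff_inv_one_sub_pow_succ hu]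
  simp_rw [coeff_sum_X_pow_pow, mul_sum]

end Field

theorem reverse_series_counts_dissections_general (r : ℕ) (d : Fin r → ℕ)
    (hd2 : ∀ i, 2 ≤ d i) (a : ℕ → ℚ)
    (hinv : coeffSeries a - ∑ i : Fin r, (coeffSeries a) ^ (d i) = X) :
    ∀ n : ℕ, a n =
      ∑ v ∈ (Fintype.piFinset fun _ : Fin r => Finset.range (n + 1)).filter
          (fun v => ∑ i, (d i - 1) * v i = n),
        (1 / ((n : ℚ) + 1)) * (((n + ∑ i, v i).choose (∑ i, v i) : ℕ) : ℚ) *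
          ((Nat.multinomial Finset.univ v : ℕ) : ℚ) := by
  intro n
  have hw : ∀ i, d i - 1 ≠ 0 := fun i => by have := hd2 i; omega
  have hFw : coeffSeries a - ∑ i, coeffSeries a ^ (d i - 1 + 1) = X := by
    simpa only [Nat.sub_add_cancel (one_le_two.trans (hd2 _))] using hinv
  have hcoeff : coeff (n + 1) (coeffSeries a) = a n := by simp [coeffSeries]
  have hsum : a n * (n + 1) =
      ∑ v ∈ (Fintype.piFinset fun _ : Fin r => range (n + 1)) with ∑ i, (d i - 1) * v i = n,
        (((n + ∑ i, v i).choose (∑ i, v i) : ℕ) : ℚ) * (Nat.multinomial univ v : ℚ) := by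
    rw [← hcoeff, coeff_succ_mul_eq_sum_of_sub_sum_pow_eq_X hw (by simp [coeffSeries]) hFw,
      ← sum_range_sum_piAntidiag_filter (w := fun i => d i - 1) hw]
    refine sum_congr rfl fun k _ => sum_congr rfl fun v hv => ?_
    rw [(mem_piAntidiag.mp (mem_filter.mp hv).1).1]
  simp_rw [mul_assoc, ← mul_sum, ← hsum]
  field_simp

/-- Polygonal partitions: let `2 ≤ d_1 < d_2 < ⋯ < d_r` and let
`z = ∑_{n≥0} a_n x^{n+1}` be the compositional inverse of
`x = z - ∑_i z^{d_i}` (i.e. `F - ∑_i F^{d_i} = X`).  Then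
`a_n = ∑_λ (1/(n+1)) C(n+k,k) ⬝ multinomial(k; k_{d_1-1},…,k_{d_r-1})`,
summed over tuples with `∑_i (d_i - 1) k_{d_i-1} = n` and `k = ∑_i k_{d_i-1}`. -/
theorem reverse_series_counts_dissections (r : ℕ) (d : Fin r → ℕ)
    (hd2 : ∀ i, 2 ≤ d i) (hmono : StrictMono d) (a : ℕ → ℚ)
    (hinv : coeffSeries a - ∑ i : Fin r, (coeffSeries a) ^ (d i) = X) :
    ∀ n : ℕ, a n =
      ∑ v ∈ (Fintype.piFinset fun _ : Fin r => Finset.range (n + 1)).filter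
          (fun v => ∑ i, (d i - 1) * v i = n),
        (1 / ((n : ℚ) + 1)) * (((n + ∑ i, v i).choose (∑ i, v i) : ℕ) : ℚ) *
          ((Nat.multinomial Finset.univ v : ℕ) : ℚ) :=
  reverse_series_counts_dissections_general r d hd2 a hinv
end

section
/- Let λ be a partition of n with k_j parts of size j for each j and k total parts. Then the quantity a_λ = (1/(n+1)) * binomial(n+k, k) * multinomial(k; k_1, k_2, ..., k_n) is a natural number; it counts the number of rooted plane trees on n+k+1 vertices with downdegree sequence (n+1, 0, k_1, k_2, ..., k_n). -/
/-- Let `λ` be a partition of `n` with `k_j` parts of size `j` (encoded by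
`kvec : Fin n → ℕ`, where `kvec j` is the number of parts of size `j+1`) and
`k` total parts.  Then `a_λ = (1/(n+1)) C(n+k,k) ⬝ multinomial(k; k_1,…,k_n)`
is a natural number, i.e. `n+1` divides `C(n+k,k) * multinomial(k; k_1,…,k_n)`. -/
theorem dissection_count_integral (n k : ℕ) (kvec : Fin n → ℕ)
    (hparts : ∑ j : Fin n, ((j : ℕ) + 1) * kvec j = n)
    (htotal : ∑ j : Fin n, kvec j = k) :
    (n + 1) ∣ (n + k).choose k * Nat.multinomial Finset.univ kvec := by
  classical
  set M := Nat.multinomial Finset.univ kvec with hM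
  set target := (n + k).choose k * M with htarget
  have hP : (∏ j : Fin n, Nat.factorial (kvec j)) * M = Nat.factorial k := by
    rw [hM]
    rw [Nat.multinomial_spec, htotal]
  have hchoose : (n + k).choose k * Nat.factorial k * Nat.factorial n = Nat.factorial (n+k) := by
    have := Nat.choose_mul_factorial_mul_factorial (Nat.le_add_left k n)
    simpa [Nat.add_sub_cancel] using this
  -- key step: for every j, (n+1) ∣ kvec j * target
  have key : ∀ j : Fin n, (n + 1) ∣ kvec j * target := by
    intro j
    rcases Nat.eq_zero_or_pos (kvec j) with h0 | h1
    · simp [h0]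
    · set h : Fin n → ℕ := Function.update kvec j (kvec j - 1) with hh
      have hjk : kvec j ≤ k := htotal ▸ Finset.single_le_sum (f := kvec) (fun _ _ => Nat.zero_le _) (Finset.mem_univ j)
      have hsumh : ∑ i : Fin n, h i = k - 1 := by
        rw [hh, Finset.sum_update_of_mem (Finset.mem_univ j)]
        have h2 := Finset.add_sum_erase Finset.univ kvec (Finset.mem_univ j)
        rw [Finset.erase_eq] at h2
        omega
      set T := Nat.multinomial Finset.univ (Fin.cons (n + 1) h : Fin (n + 1) → ℕ) with hT
      have hspecT : (Nat.factorial (n+1) * ∏ i : Fin n, Nat.factorial (h i)) * T = Nat.factorial (n+k) := by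
        have := Nat.multinomial_spec Finset.univ (Fin.cons (n + 1) h : Fin (n + 1) → ℕ)
        rw [Fin.prod_univ_succ, Fin.sum_univ_succ] at this
        simp only [Fin.cons_zero, Fin.cons_succ] at this
        rw [hsumh] at this
        have hk1 : 1 ≤ k := le_trans h1 hjk
        have : (Nat.factorial (n+1) * ∏ i : Fin n, Nat.factorial (h i)) * T = Nat.factorial (n + 1 + (k - 1)) := this
        rwa [show n + 1 + (k - 1) = n + k by omega] at this
      have hprodh : kvec j * ∏ i : Fin n, Nat.factorial (h i) = ∏ i : Fin n, Nat.factorial (kvec i) := by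
        obtain ⟨m, hm⟩ : ∃ m, kvec j = m + 1 :=
          ⟨kvec j - 1, by omega⟩
        have hfact : kvec j * Nat.factorial (kvec j - 1) = Nat.factorial (kvec j) := by
          rw [hm]; simp [Nat.factorial_succ]
        have e1 : ∏ i : Fin n, Nat.factorial (h i) =
            Nat.factorial (h j) * ∏ i ∈ Finset.univ.erase j, Nat.factorial (h i) :=
          (Finset.mul_prod_erase _ _ (Finset.mem_univ j)).symm
        have e2 : ∏ i ∈ Finset.univ.erase j, Nat.factorial (h i) =
            ∏ i ∈ Finset.univ.erase j, Nat.factorial (kvec i) :=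
          Finset.prod_congr rfl fun i hi => by
            rw [hh, Function.update_of_ne (Finset.ne_of_mem_erase hi)]
        have e3 : h j = kvec j - 1 := by rw [hh]; simp
        rw [e1, e2, e3, ← mul_assoc, hfact]
        exact Finset.mul_prod_erase Finset.univ (fun i => Nat.factorial (kvec i))
          (Finset.mem_univ j)
      refine ⟨T, ?_⟩
      have hpos : 0 < Nat.factorial n * ∏ i : Fin n, Nat.factorial (h i) :=
        Nat.mul_pos (Nat.factorial_pos n) (Finset.prod_pos fun i _ => Nat.factorial_pos _)
      apply Nat.eq_of_mul_eq_mul_right hpos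
      calc kvec j * target * (Nat.factorial n * ∏ i : Fin n, Nat.factorial (h i))
          = (n + k).choose k * ((∏ i : Fin n, Nat.factorial (kvec i)) * M) * Nat.factorial n := by
            rw [htarget, ← hprodh]; ring
        _ = Nat.factorial (n+k) := by rw [hP, hchoose]
        _ = (Nat.factorial (n+1) * ∏ i : Fin n, Nat.factorial (h i)) * T := hspecT.symm
        _ = (n + 1) * T * (Nat.factorial n * ∏ i : Fin n, Nat.factorial (h i)) := by
            rw [Nat.factorial_succ]; ring
  -- combine: (n+1) divides gcd(n+1, kvec) * target, and that gcd is 1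
  set G := Nat.gcd (n + 1) (Finset.gcd Finset.univ kvec) with hG
  have hdvd : (n + 1) ∣ G * target := by
    have e1 : G * target =
        Nat.gcd ((n + 1) * target) ((Finset.gcd Finset.univ kvec) * target) :=
      (Nat.gcd_mul_right _ _ _).symm
    rw [e1]
    apply Nat.dvd_gcd (Dvd.intro target rfl)
    have e2 : (Finset.gcd Finset.univ kvec) * target =
        Finset.gcd Finset.univ (fun j => kvec j * target) := by
      rw [Finset.gcd_mul_right]; simp
    rw [e2]
    exact Finset.dvd_gcd fun j _ => key j
  have hG1 : G = 1 := by
    have h1 : G ∣ n + 1 := Nat.gcd_dvd_left _ _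
    have h2 : G ∣ n := by
      rw [← hparts]
      refine Finset.dvd_sum fun j _ => Dvd.dvd.mul_left ?_ _
      exact dvd_trans (Nat.gcd_dvd_right _ _) (Finset.gcd_dvd (Finset.mem_univ j))
    have := Nat.dvd_sub h1 h2
    simpa using this
  rw [hG1, one_mul] at hdvd
  exact hdvd
end

section
/- Rooted plane tree count by downdegree type (Theorem of Kreweras/Armstrong–Eu): for n ≥ 1 and r = (r_1,...,r_n) with \sum_j j*r_j = n, the number of rooted plane trees with n+1 vertices and downdegree sequence (n - |r| + 1, r_1, ..., r_n), where |r| = \sum r_j, equals (1/(1+n)) * (1+n)(n)(n-1)...(n-|r|+2) / (r_1! r_2! ... r_n!), i.e., (1/(n+1)) * (n+1)!/((n+1-|r|)! * r_1!...r_n!). -/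
/-- A rooted plane tree: a root together with an ordered (finite) list of subtrees. -/
inductive PlaneTree : Type
  | node : List PlaneTree → PlaneTree

namespace PlaneTree

/-- The number of vertices of a plane tree. -/
def size : PlaneTree → ℕ
  | .node ts => 1 + (ts.attach.map (fun t => size t.1)).sum
decreasing_by
  have h := List.sizeOf_lt_of_mem t.2
  simp only [PlaneTree.node.sizeOf_spec]; omega

/-- The number of vertices of a plane tree having exactly `j` children
(downdegree `j`). -/
def downCount (j : ℕ) : PlaneTree → ℕ
  | .node ts => (if ts.length = j then 1 else 0) +
      (ts.attach.map (fun t => downCount j t.1)).sum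
decreasing_by
  have h := List.sizeOf_lt_of_mem t.2
  simp only [PlaneTree.node.sizeOf_spec]; omega

end PlaneTree

/-!
Reading the child counts of a plane tree in depth-first order (its Łukasiewicz word) identifies
plane trees with `n + 1` vertices and downdegree multiset `M` with the words that rearrange `M`
and whose walk `∑_{i<j} (x_i - 1)` stays nonnegative until it ends at `-1`. Such a rearrangement
has letter sum `n` and length `n + 1`, and by the cycle lemma exactly one of its `n + 1` cyclic
rotations is a tree code, namely the one starting where the walk first attains its minimum. Hence
the trees number `1 / (n + 1)` times the multinomial coefficient `(n + 1)! / ∏_a (mult_M a)!`.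
-/

open scoped Nat

/-- `IsForestCode k l`: `l` is the Łukasiewicz word of a forest of `k` plane trees. Reading a root
with `c` children turns the task of reading `k + 1` trees into that of reading `c + k` trees. -/
inductive IsForestCode : ℕ → List ℕ → Prop
  | nil : IsForestCode 0 []
  | cons {c k : ℕ} {l : List ℕ} : IsForestCode (c + k) l → IsForestCode (k + 1) (c :: l)

theorem IsForestCode.append {a b : ℕ} {x y : List ℕ} (hx : IsForestCode a x)
    (hy : IsForestCode b y) : IsForestCode (a + b) (x ++ y) := by
  induction hx with
  | nil => simpa using hy
  | @cons c k l _ ih =>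
    rw [show k + 1 + b = k + b + 1 by omega]
    exact .cons (by rwa [← add_assoc])

theorem isForestCode_iff {k : ℕ} {l : List ℕ} :
    IsForestCode k l ↔ l.sum + k = l.length ∧ ∀ j < l.length, j < (l.take j).sum + k := by
  induction l generalizing k with
  | nil =>
    refine ⟨fun | .nil => by simp, fun ⟨h, _⟩ => ?_⟩
    simp only [List.sum_nil, zero_add, List.length_nil] at h
    exact h ▸ .nil
  | cons c l ih =>
    constructor
    · rintro (_ | @⟨_, k, _, h⟩)
      obtain ⟨hsum, hpre⟩ := ih.1 h
      refine ⟨by simp only [List.sum_cons, List.length_cons]; omega, fun j hj => ?_⟩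
      rcases j with _ | j
      · simp
      · have := hpre j (by simpa using hj)
        simp only [List.take_succ_cons, List.sum_cons]
        omega
    · rintro ⟨hsum, hpre⟩
      obtain ⟨k, rfl⟩ := Nat.exists_eq_add_one.2 (by simpa using hpre 0 (by simp))
      simp only [List.sum_cons, List.length_cons] at hsum
      refine .cons (ih.2 ⟨by omega, fun j hj => ?_⟩)
      have := hpre (j + 1) (by simpa using hj)
      simp only [List.take_succ_cons, List.sum_cons] at this
      omega

theorem IsForestCode.sum_add_one {l : List ℕ} (h : IsForestCode 1 l) : l.sum + 1 = l.length :=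
  (isForestCode_iff.1 h).1

namespace PlaneTree

theorem forest_induction {P : List PlaneTree → Prop} (nil : P [])
    (cons : ∀ cs ts, P cs → P ts → P (node cs :: ts)) : ∀ ts, P ts
  | [] => nil
  | node cs :: ts => cons cs ts (forest_induction nil cons cs) (forest_induction nil cons ts)

def forestCode : List PlaneTree → List ℕ
  | [] => []
  | node cs :: ts => cs.length :: forestCode cs ++ forestCode ts

def code (T : PlaneTree) : List ℕ := forestCode [T]

theorem forestCode_append (ts us : List PlaneTree) :
    forestCode (ts ++ us) = forestCode ts ++ forestCode us := by
  induction ts using forest_induction with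
  | nil => simp [forestCode]
  | cons cs ts _ ih => simp [forestCode, ih]

theorem size_node (ts : List PlaneTree) : (node ts).size = 1 + (ts.map size).sum := by
  rw [size]; simp

theorem downCount_node (j : ℕ) (ts : List PlaneTree) :
    (node ts).downCount j = (if ts.length = j then 1 else 0) + (ts.map (downCount j)).sum := by
  rw [downCount]; simp

theorem length_forestCode (ts : List PlaneTree) : (forestCode ts).length = (ts.map size).sum := by
  induction ts using forest_induction with
  | nil => simp [forestCode]
  | cons cs ts ihc iht =>
    simp only [forestCode, List.cons_append, List.length_cons, List.length_append, ihc, iht,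
      List.map_cons, size_node, List.sum_cons]
    omega

theorem count_forestCode (j : ℕ) (ts : List PlaneTree) :
    (forestCode ts).count j = (ts.map (downCount j)).sum := by
  induction ts using forest_induction with
  | nil => simp [forestCode]
  | cons cs ts ihc iht =>
    simp only [forestCode, List.cons_append, List.count_cons, List.count_append, ihc, iht,
      List.map_cons, List.sum_cons, downCount_node, beq_iff_eq]
    omega

theorem isForestCode_forestCode (ts : List PlaneTree) : IsForestCode ts.length (forestCode ts) := by
  induction ts using forest_induction with
  | nil => simpa [forestCode] using .nil
  | cons cs ts ihc iht =>
    rw [forestCode, List.length_cons, List.cons_append]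
    exact .cons (ihc.append iht)

theorem length_code (T : PlaneTree) : T.code.length = T.size := by
  simp [code, length_forestCode]

theorem count_code (j : ℕ) (T : PlaneTree) : T.code.count j = T.downCount j := by
  simp [code, count_forestCode]

theorem isForestCode_code (T : PlaneTree) : IsForestCode 1 T.code :=
  isForestCode_forestCode [T]

theorem existsUnique_forestCode_eq {k : ℕ} {l : List ℕ} (h : IsForestCode k l) :
    ∃! ts : List PlaneTree, ts.length = k ∧ forestCode ts = l := by
  induction h with
  | nil =>
    exact ⟨[], ⟨rfl, by simp [forestCode]⟩,
      fun _ ⟨hlen, _⟩ => List.eq_nil_of_length_eq_zero hlen⟩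
  | @cons c k l _ ih =>
    obtain ⟨ts, ⟨hlen, hcode⟩, huniq⟩ := ih
    refine ⟨node (ts.take c) :: ts.drop c, ⟨by simp [hlen], ?_⟩, ?_⟩
    · rw [forestCode, List.cons_append, ← forestCode_append, List.take_append_drop,
        hcode, List.length_take, min_eq_left (by omega)]
    · rintro (_ | ⟨⟨cs⟩, us⟩) ⟨hlen', hcode'⟩
      · simp at hlen'
      · rw [forestCode, List.cons_append, ← forestCode_append, List.cons.injEq] at hcode'
        obtain ⟨rfl, hcode'⟩ := hcode'
        obtain rfl := huniq (cs ++ us) ⟨by simpa using hlen', hcode'⟩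
        simp

theorem existsUnique_code_eq {l : List ℕ} (h : IsForestCode 1 l) :
    ∃! T : PlaneTree, T.code = l := by
  obtain ⟨ts, ⟨hlen, hcode⟩, huniq⟩ := existsUnique_forestCode_eq h
  obtain ⟨T, rfl⟩ := List.length_eq_one_iff.1 hlen
  exact ⟨T, hcode, fun U hU => by simpa using huniq [U] ⟨rfl, hU⟩⟩

theorem card_subtype_code (P : List ℕ → Prop) :
    Nat.card {T : PlaneTree // P T.code} = Nat.card {l : List ℕ // IsForestCode 1 l ∧ P l} := by
  refine Nat.card_congr
    (.ofBijective (fun T => ⟨T.1.code, isForestCode_code _, T.2⟩) ⟨?_, ?_⟩)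
  · rintro ⟨T, _⟩ ⟨U, _⟩ h
    have hTU : T.code = U.code := congrArg Subtype.val h
    exact Subtype.ext ((existsUnique_code_eq (isForestCode_code U)).unique hTU rfl)
  · rintro ⟨l, hl, hP⟩
    obtain ⟨T, rfl, -⟩ := existsUnique_code_eq hl
    exact ⟨⟨T, hP⟩, rfl⟩

end PlaneTree

theorem existsUnique_lt_forall_le_add {f : ℕ → ℤ} {L : ℕ} (hL : 0 < L)
    (hf : ∀ m < L, f (m + L) = f m - 1) :
    ∃! k, k < L ∧ ∀ j < L, f k ≤ f (k + j) := by
  have not_both {a b : ℕ} (hab : a < b) (hb : b < L) (ha : ∀ j < L, f a ≤ f (a + j)) :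
      ¬ ∀ j < L, f b ≤ f (b + j) := fun hb' => by
    have h₁ := ha (b - a) (by omega)
    have h₂ := hb' (a + L - b) (by omega)
    rw [Nat.add_sub_cancel' hab.le] at h₁
    rw [Nat.add_sub_cancel' (by omega), hf a (by omega)] at h₂
    omega
  obtain ⟨k₀, hk₀, hmin⟩ := (Finset.range L).exists_min_image f ⟨0, by simpa⟩
  simp only [Finset.mem_range] at hk₀ hmin
  -- the witness is the first point of `[0, L)` at which `f` attains its minimum
  have hex : ∃ k, k < L ∧ f k ≤ f k₀ := ⟨k₀, hk₀, le_rfl⟩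
  have ⟨hk, hle⟩ := Nat.find_spec hex
  have hbefore : ∀ i < Nat.find hex, ¬(i < L ∧ f i ≤ f k₀) := fun i => Nat.find_min hex
  set k := Nat.find hex
  have hfirst : ∀ j < L, f k ≤ f (k + j) := by
    intro j hj
    rcases lt_or_ge (k + j) L with h | h
    · exact hle.trans (hmin _ h)
    · have hlt : f k₀ < f (k + j - L) := by
        by_contra! hcon
        exact hbefore (k + j - L) (by omega) ⟨by omega, hcon⟩
      have := hf (k + j - L) (by omega)
      rw [Nat.sub_add_cancel h] at this
      omega
  refine ⟨k, ⟨hk, hfirst⟩, fun k' ⟨hk', hk'min⟩ => ?_⟩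
  rcases lt_trichotomy k' k with h | h | h
  · exact absurd hfirst (not_both h hk hk'min)
  · exact h
  · exact absurd hk'min (not_both h hk' hfirst)

namespace List

theorem sum_take_rotate_add {l : List ℕ} {k j : ℕ} (hk : k ≤ l.length) (hj : j ≤ l.length) :
    ((l ++ l).take k).sum + ((l.rotate k).take j).sum = ((l ++ l).take (k + j)).sum := by
  have hrot : (l.rotate k).take j = ((l ++ l).drop k).take j := by
    rw [rotate_eq_drop_append_take hk, drop_append_of_le_length hk, take_append, take_append,
      take_take, length_drop, min_eq_left (by omega)]
  rw [hrot, take_add, sum_append]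

theorem sum_take_length_add_append_self {l : List ℕ} {m : ℕ} (hm : m ≤ l.length) :
    ((l ++ l).take (m + l.length)).sum = ((l ++ l).take m).sum + l.sum := by
  rw [add_comm, take_length_add_append, sum_append, take_append_of_le_length hm, add_comm]

/-- The walk `m ↦ ∑_{i<m} (x_i - 1)` of the word `l ++ l`, in which every rotation of `l` is a
window of length `l.length`. -/
def cyclicWalk (l : List ℕ) (m : ℕ) : ℤ := (((l ++ l).take m).sum : ℤ) - m

theorem isForestCode_one_rotate_iff {l : List ℕ} (hl : l.sum + 1 = l.length) {k : ℕ}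
    (hk : k ≤ l.length) :
    IsForestCode 1 (l.rotate k) ↔ ∀ j < l.length, l.cyclicWalk k ≤ l.cyclicWalk (k + j) := by
  rw [isForestCode_iff, (l.rotate_perm k).sum_eq, length_rotate]
  refine and_iff_right_of_imp (fun _ => hl) |>.trans (forall₂_congr fun j hj => ?_)
  have := sum_take_rotate_add hk hj.le
  simp only [cyclicWalk]
  omega

theorem existsUnique_isForestCode_rotate {l : List ℕ} (hl : l.sum + 1 = l.length) :
    ∃! k, k < l.length ∧ IsForestCode 1 (l.rotate k) := by
  have hwalk : ∀ m < l.length, l.cyclicWalk (m + l.length) = l.cyclicWalk m - 1 := by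
    intro m hm
    have := sum_take_length_add_append_self hm.le
    simp only [cyclicWalk]
    omega
  obtain ⟨k, ⟨hk, hmin⟩, huniq⟩ := existsUnique_lt_forall_le_add (by omega) hwalk
  refine ⟨k, ⟨hk, (isForestCode_one_rotate_iff hl hk.le).2 hmin⟩, ?_⟩
  rintro k' ⟨hk', hcode⟩
  exact huniq k' ⟨hk', (isForestCode_one_rotate_iff hl hk'.le).1 hcode⟩

end List

theorem IsForestCode.eq_zero_of_rotate {l : List ℕ} (h : IsForestCode 1 l) {m : ℕ}
    (hm : m < l.length) (hrot : IsForestCode 1 (l.rotate m)) : m = 0 :=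
  (List.existsUnique_isForestCode_rotate h.sum_add_one).unique ⟨hm, hrot⟩
    ⟨by omega, by rwa [List.rotate_zero]⟩

theorem IsForestCode.eq_of_rotate_eq {c c' : List ℕ} (hc : IsForestCode 1 c)
    (hc' : IsForestCode 1 c') {k k' : ℕ} (hk : k < c.length) (hk' : k' < c'.length)
    (h : c.rotate k = c'.rotate k') : c = c' ∧ k = k' := by
  wlog hkk' : k' ≤ k generalizing c c' k k'
  · exact (this hc' hc hk' hk h.symm (by omega)).imp Eq.symm Eq.symm
  have hc'eq : c' = c.rotate (k - k') := by
    rw [← List.rotate_eq_rotate (n := k'), List.rotate_rotate, Nat.sub_add_cancel hkk', h]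
  have hkk : k - k' = 0 := hc.eq_zero_of_rotate (by omega) (hc'eq ▸ hc')
  rw [hkk, List.rotate_zero] at hc'eq
  exact ⟨hc'eq.symm, by omega⟩

theorem card_isForestCode_mul_card {M : Multiset ℕ} (hM : M.sum + 1 = Multiset.card M) :
    Nat.card {l : List ℕ // IsForestCode 1 l ∧ (l : Multiset ℕ) = M} * Multiset.card M =
      Nat.card {l : List ℕ // (l : Multiset ℕ) = M} := by
  have hlen {l : List ℕ} (hl : (l : Multiset ℕ) = M) : l.length = Multiset.card M := by
    rw [← hl, Multiset.coe_card]
  have hperm {l : List ℕ} (hl : (l : Multiset ℕ) = M) (k : ℕ) :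
      (l.rotate k : Multiset ℕ) = M :=
    (Multiset.coe_eq_coe.2 (l.rotate_perm k)).trans hl
  rw [← Nat.card_fin (Multiset.card M), ← Nat.card_prod]
  refine Nat.card_congr
    (.ofBijective (fun p => ⟨p.1.1.rotate p.2, hperm p.1.2.2 _⟩) ⟨?_, ?_⟩)
  · rintro ⟨⟨c, hc, hcM⟩, k⟩ ⟨⟨c', hc', hc'M⟩, k'⟩ h
    obtain ⟨rfl, hkk'⟩ := hc.eq_of_rotate_eq hc' (by rw [hlen hcM]; exact k.2)
      (by rw [hlen hc'M]; exact k'.2) (congrArg Subtype.val h)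
    rw [Fin.ext (a := k) (b := k') hkk']
  · rintro ⟨w, hw⟩
    have hwsum : w.sum + 1 = w.length := by rw [hlen hw, ← hM, ← hw, Multiset.sum_coe]
    obtain ⟨k, ⟨hk, hcode⟩, -⟩ := w.existsUnique_isForestCode_rotate hwsum
    refine ⟨(⟨w.rotate k, hcode, hperm hw k⟩,
      ⟨(w.length - k) % w.length, (hlen hw) ▸ Nat.mod_lt _ (by omega)⟩), Subtype.ext ?_⟩
    change (w.rotate k).rotate ((w.length - k) % w.length) = w
    rw [← List.length_rotate (n := k), List.rotate_mod, List.length_rotate, List.rotate_rotate,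
      Nat.add_sub_cancel' hk.le, List.rotate_length]

namespace Multiset

variable {α : Type*} [DecidableEq α]

instance finite_subtype_coe_eq (m : Multiset α) : Finite {l : List α // (l : Multiset α) = m} :=
  Finite.of_injective (fun l => (⟨l.1, (mem_lists_iff _ _).2 l.2.symm⟩ : {x // x ∈ m.lists}))
    fun _ _ h => Subtype.ext (congrArg (fun x : {x // x ∈ m.lists} => x.1) h)

theorem natCard_subtype_coe_eq_sum {m : Multiset α} (hm : m ≠ 0) :
    Nat.card {l : List α // (l : Multiset α) = m} =
      ∑ a ∈ m.toFinset, Nat.card {l : List α // (l : Multiset α) = m.erase a} := by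
  rw [← Finset.sum_coe_sort, ← Nat.card_sigma]
  refine (Nat.card_congr (.ofBijective (fun p => ⟨p.1.1 :: p.2.1,
    by rw [← cons_coe, p.2.2, cons_erase (mem_toFinset.1 p.1.2)]⟩) ⟨?_, ?_⟩)).symm
  · rintro ⟨⟨a, _⟩, ⟨t, _⟩⟩ ⟨⟨a', _⟩, ⟨t', _⟩⟩ h
    obtain ⟨rfl, rfl⟩ := List.cons.inj (congrArg Subtype.val h)
    rfl
  · rintro ⟨_ | ⟨a, t⟩, rfl⟩
    · exact absurd rfl hm
    · exact ⟨⟨⟨a, by simp⟩, ⟨t, by simp⟩⟩, rfl⟩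

theorem prod_factorial_count_eq_mul {m : Multiset α} {s : Finset α} {a : α} (ha : a ∈ m)
    (has : a ∈ s) :
    ∏ b ∈ s, (m.count b)! = (∏ b ∈ s, ((m.erase a).count b)!) * m.count a := by
  have hrest : ∏ b ∈ s.erase a, ((m.erase a).count b)! = ∏ b ∈ s.erase a, (m.count b)! :=
    Finset.prod_congr rfl fun b hb => by rw [count_erase_of_ne (Finset.ne_of_mem_erase hb)]
  rw [← Finset.mul_prod_erase s _ has, ← Finset.mul_prod_erase s _ has, hrest, count_erase_self,
    ← Nat.mul_factorial_pred (count_pos.2 ha).ne']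
  ring

theorem natCard_subtype_coe_eq_mul_prod_factorial (m : Multiset α) {s : Finset α}
    (hs : m.toFinset ⊆ s) :
    Nat.card {l : List α // (l : Multiset α) = m} * ∏ a ∈ s, (m.count a)! = (card m)! := by
  induction m using strongInductionOn with
  | ih m ih =>
  rcases eq_or_ne m 0 with rfl | hm
  · simp
  have hcard : card m ≠ 0 := by simpa using hm
  calc Nat.card {l : List α // (l : Multiset α) = m} * ∏ a ∈ s, (m.count a)!
      = ∑ a ∈ m.toFinset, Nat.card {l : List α // (l : Multiset α) = m.erase a} *
          (∏ b ∈ s, ((m.erase a).count b)!) * m.count a := by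
        rw [natCard_subtype_coe_eq_sum hm, Finset.sum_mul]
        refine Finset.sum_congr rfl fun a ha => ?_
        rw [prod_factorial_count_eq_mul (mem_toFinset.1 ha) (hs ha), mul_assoc]
    _ = ∑ a ∈ m.toFinset, (card m - 1)! * m.count a := by
        refine Finset.sum_congr rfl fun a ha => ?_
        have ha := mem_toFinset.1 ha
        rw [ih _ (erase_lt.2 ha) ((toFinset_subset.2 (erase_subset a m)).trans hs),
          card_erase_of_mem ha]
        rfl
    _ = (card m)! := by
        rw [← Finset.mul_sum, toFinset_sum_count_eq, mul_comm, Nat.mul_factorial_pred hcard]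

end Multiset

section Downdegree

variable (n : ℕ) (r : Fin n → ℕ)

def downdegreeMultiset : Multiset ℕ :=
  Multiset.replicate (n - ∑ j, r j + 1) 0 + ∑ j, Multiset.replicate (r j) ((j : ℕ) + 1)

theorem count_zero_downdegreeMultiset :
    (downdegreeMultiset n r).count 0 = n - ∑ j, r j + 1 := by
  simp [downdegreeMultiset, Multiset.count_sum', Multiset.count_replicate]

theorem count_succ_downdegreeMultiset (i : Fin n) :
    (downdegreeMultiset n r).count ((i : ℕ) + 1) = r i := by
  simp [downdegreeMultiset, Multiset.count_sum', Multiset.count_replicate, Fin.val_inj]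

theorem count_downdegreeMultiset_of_lt {a : ℕ} (ha : n < a) :
    (downdegreeMultiset n r).count a = 0 := by
  simp only [downdegreeMultiset, Multiset.count_eq_zero, Multiset.mem_add,
    Multiset.mem_sum, Multiset.mem_replicate]
  rintro (⟨-, rfl⟩ | ⟨i, -, -, rfl⟩) <;> omega

theorem card_downdegreeMultiset (hr : ∑ j, r j ≤ n) :
    Multiset.card (downdegreeMultiset n r) = n + 1 := by
  simp only [downdegreeMultiset, Multiset.card_add, Multiset.card_replicate, Multiset.card_sum]
  omega

theorem sum_downdegreeMultiset :
    (downdegreeMultiset n r).sum = ∑ j : Fin n, ((j : ℕ) + 1) * r j := by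
  simp [downdegreeMultiset, Multiset.sum_sum, mul_comm]

variable {n r}

theorem coe_eq_downdegreeMultiset_iff (hr : ∑ j, r j ≤ n) (l : List ℕ) :
    (l : Multiset ℕ) = downdegreeMultiset n r ↔ l.length = n + 1 ∧
      l.count 0 = n - ∑ j, r j + 1 ∧ ∀ j : Fin n, l.count ((j : ℕ) + 1) = r j := by
  simp only [← Multiset.coe_count, ← Multiset.coe_card]
  constructor
  · intro h
    exact ⟨h ▸ card_downdegreeMultiset n r hr, h ▸ count_zero_downdegreeMultiset n r,
      fun j => h ▸ count_succ_downdegreeMultiset n r j⟩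
  · rintro ⟨hlen, hzero, hsucc⟩
    -- the prescribed multiplicities already account for all `n + 1` letters
    refine (Multiset.eq_of_le_of_card_le (Multiset.le_iff_count.2 fun a => ?_) ?_).symm
    · rcases a with _ | i
      · rw [count_zero_downdegreeMultiset, hzero]
      · rcases lt_or_ge i n with hi | hi
        · rw [count_succ_downdegreeMultiset n r ⟨i, hi⟩, hsucc ⟨i, hi⟩]
        · rw [count_downdegreeMultiset_of_lt n r (by omega)]
          exact Nat.zero_le _
    · rw [hlen, card_downdegreeMultiset n r hr]

theorem toFinset_downdegreeMultiset_subset :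
    (downdegreeMultiset n r).toFinset ⊆ Finset.range (n + 1) := fun a ha => by
  by_contra h
  rw [Multiset.mem_toFinset, ← Multiset.count_ne_zero,
    count_downdegreeMultiset_of_lt n r (by simpa using h)] at ha
  exact ha rfl

theorem prod_factorial_count_downdegreeMultiset (hr : ∑ j, r j ≤ n) :
    ∏ a ∈ Finset.range (n + 1), ((downdegreeMultiset n r).count a)! =
      (n + 1 - ∑ j, r j)! * ∏ j, (r j)! := by
  rw [Finset.prod_range_succ',
    Finset.prod_range (fun i => ((downdegreeMultiset n r).count (i + 1))!),
    count_zero_downdegreeMultiset, mul_comm, Nat.sub_add_comm hr]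
  simp only [count_succ_downdegreeMultiset]

end Downdegree

theorem planeTree_count_by_downdegree_general (n : ℕ) (r : Fin n → ℕ)
    (hsum : ∑ j : Fin n, ((j : ℕ) + 1) * r j = n) :
    Nat.card {T : PlaneTree // T.size = n + 1 ∧
        T.downCount 0 = n - (∑ j, r j) + 1 ∧
        ∀ j : Fin n, T.downCount ((j : ℕ) + 1) = r j} *
      ((n + 1 - ∑ j, r j).factorial * ∏ j : Fin n, (r j).factorial)
      = n.factorial := by
  have hr : ∑ j, r j ≤ n :=
    (Finset.sum_le_sum fun j _ => Nat.le_mul_of_pos_left (r j) (Nat.succ_pos j)).trans_eq hsum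
  have htrees : Nat.card {T : PlaneTree // T.size = n + 1 ∧
        T.downCount 0 = n - (∑ j, r j) + 1 ∧ ∀ j : Fin n, T.downCount ((j : ℕ) + 1) = r j} =
      Nat.card {l : List ℕ //
        IsForestCode 1 l ∧ (l : Multiset ℕ) = downdegreeMultiset n r} := by
    rw [← PlaneTree.card_subtype_code]
    refine Nat.card_congr (Equiv.subtypeEquivRight fun T => ?_)
    simp only [coe_eq_downdegreeMultiset_iff hr, PlaneTree.length_code, PlaneTree.count_code]
  have hcycle := card_isForestCode_mul_card (M := downdegreeMultiset n r)
    (by rw [sum_downdegreeMultiset, hsum, card_downdegreeMultiset n r hr])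
  have hwords := Multiset.natCard_subtype_coe_eq_mul_prod_factorial _
    (toFinset_downdegreeMultiset_subset (r := r))
  rw [prod_factorial_count_downdegreeMultiset hr, card_downdegreeMultiset n r hr] at hwords
  rw [card_downdegreeMultiset n r hr] at hcycle
  apply Nat.eq_of_mul_eq_mul_right n.succ_pos
  rw [htrees, mul_right_comm, hcycle, hwords, Nat.factorial_succ, mul_comm]

/-- Kreweras / Armstrong–Eu: for `n ≥ 1` and `r = (r_1,…,r_n)` (encoded by
`r : Fin n → ℕ`, `r j` being `r_{j+1}`) with `∑ j, j * r_j = n`, the number of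
rooted plane trees with `n+1` vertices and downdegree sequence
`(n - |r| + 1, r_1, …, r_n)` equals `(1/(n+1)) * (n+1)! / ((n+1-|r|)! r_1!⋯r_n!)`,
i.e. `n! / ((n+1-|r|)! ⬝ r_1!⋯r_n!)` — stated multiplicatively to avoid division. -/
theorem planeTree_count_by_downdegree (n : ℕ) (hn : 1 ≤ n) (r : Fin n → ℕ)
    (hsum : ∑ j : Fin n, ((j : ℕ) + 1) * r j = n) :
    Nat.card {T : PlaneTree // T.size = n + 1 ∧
        T.downCount 0 = n - (∑ j, r j) + 1 ∧
        ∀ j : Fin n, T.downCount ((j : ℕ) + 1) = r j} *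
      ((n + 1 - ∑ j, r j).factorial * ∏ j : Fin n, (r j).factorial)
      = n.factorial :=
  planeTree_count_by_downdegree_general n r hsum
end
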